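/- arXiv:0708.1357 — 5 statements merged into one kernel-verified Lean document; each statement's English description precedes it below -/
import Mathlib

section
/- For every n ≥ 1, the number of involutions in S_n avoiding the pattern 654321 equals the number of involutions in S_n avoiding the pattern 564312, i.e., |I_n(654321)| = |I_n(564312)|. -/
/-- A permutation π of {0,…,n-1} contains the pattern τ of {0,…,k-1} if some
increasing sequence of positions induces values in the same relative order as τ. -/
def PermContains {n k : ℕ} (π : Equiv.Perm (Fin n)) (τ : Equiv.Perm (Fin k)) : Prop :=
  ∃ f : Fin k → Fin n, StrictMono f ∧ ∀ a b : Fin k, τ a < τ b ↔ π (f a) < π (f b)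

/-- |I_n(τ)|: the number of τ-avoiding involutions in the symmetric group S_n. -/
noncomputable def IAvoidCount (n : ℕ) {k : ℕ} (τ : Equiv.Perm (Fin k)) : ℕ :=
  {π : Equiv.Perm (Fin n) | π⁻¹ = π ∧ ¬ PermContains π τ}.ncard

/-- The pattern 654321 (one-line notation, here zero-based). -/
def p654321 : Equiv.Perm (Fin 6) :=
  ⟨![5, 4, 3, 2, 1, 0], ![5, 4, 3, 2, 1, 0], by decide, by decide⟩

/-- The pattern 564312 (one-line notation, here zero-based). -/
def p564312 : Equiv.Perm (Fin 6) :=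
  ⟨![4, 5, 3, 2, 0, 1], ![4, 5, 3, 2, 0, 1], by decide, by decide⟩

/-!
An involution is a set of fixed points and arcs `a < π a`; call an arc outer if another arc lies
strictly inside it. For an involution, containing 654321 means having three nested arcs, i.e. two
nested outer arcs, and containing 564312 means having two crossing arcs with a third arc inside
their overlap.

Keep the fixed points and the innermost arcs, and rematch the outer openers `c` with the outer
closers `v` so that some arc lies strictly inside every new arc `(c, v)`. The allowed pairs form a
Ferrers board, and rematching changes neither the innermost arcs nor the board. Every placement
problem on a Ferrers board that has a solution has exactly one increasing solution and exactly one
solution without a crossing whose overlap is on the board, both found greedily from the largest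
column. Hence the 654321-avoiding and the 564312-avoiding involutions are both in bijection with
the skeletons left after forgetting the outer arcs.
-/

open Finset Function Set

section Placement

variable {α : Type*} [LinearOrder α] {H : α → α → Prop} {C V s : Finset α} {σ σ' : α → α}
  {a v : α}

def IsFerrers (H : α → α → Prop) : Prop :=
  ∀ ⦃c c' v v'⦄, H c v → c' ≤ c → v ≤ v' → H c' v'

structure IsPlacement (H : α → α → Prop) (C V : Finset α) (σ : α → α) : Prop where
  bijOn : BijOn σ C V
  rel : ∀ c ∈ C, H c (σ c)

def NoBoardCrossing (H : α → α → Prop) (C : Finset α) (σ : α → α) : Prop :=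
  ∀ c ∈ C, ∀ c' ∈ C, c < c' → σ c < σ c' → ¬ H c' (σ c)

theorem IsPlacement.erase (h : IsPlacement H C V σ) (ha : a ∈ C) :
    IsPlacement H (C.erase a) (V.erase (σ a)) σ where
  bijOn := by simpa only [coe_erase] using h.bijOn.sdiff_singleton ha
  rel c hc := h.rel c (mem_of_mem_erase hc)

theorem IsPlacement.insert_update (h : IsPlacement H s (V.erase v) σ)
    (ha : a ∉ s) (hv : v ∈ V) (hav : H a v) :
    IsPlacement H (insert a s) V (update σ a v) where
  bijOn := by
    have hs : BijOn (update σ a v) s (V.erase v) :=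
      h.bijOn.congr fun x hx ↦ (update_of_ne (ne_of_mem_of_not_mem hx ha) _ _).symm
    have := hs.insert (a := a) (by simp)
    rwa [update_self, ← coe_insert, ← coe_insert, insert_erase hv] at this
  rel c hc := by
    obtain rfl | hca := eq_or_ne c a
    · simpa using hav
    · rw [update_of_ne hca]
      exact h.rel c ((mem_insert.mp hc).resolve_left hca)

theorem IsPlacement.exists_erase (hH : IsFerrers H) (h : IsPlacement H C V σ)
    (ha : a ∈ C) (hmax : ∀ x ∈ C, x ≤ a) (hv : v ∈ V) (hav : H a v) :
    ∃ σ', IsPlacement H (C.erase a) (V.erase v) σ' := by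
  obtain ⟨c, hc, rfl⟩ := h.bijOn.surjOn hv
  -- exchanging the rows of the columns `c` and `a` stays on the board since `c ≤ a`
  have hswap : IsPlacement H C V (σ ∘ Equiv.swap c a) := by
    refine ⟨h.bijOn.comp (Equiv.bijOn_swap hc ha), fun x hx ↦ ?_⟩
    rcases eq_or_ne x c with rfl | hxc
    · simpa using hH (h.rel a ha) (hmax x hx) le_rfl
    rcases eq_or_ne x a with rfl | hxa
    · simpa using hav
    · simpa [Equiv.swap_apply_of_ne_of_ne hxc hxa] using h.rel x hx
  exact ⟨_, by simpa using hswap.erase ha⟩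

theorem exists_isPlacement_strictMonoOn (hH : IsFerrers H) (h : IsPlacement H C V σ) :
    ∃ σ', IsPlacement H C V σ' ∧ StrictMonoOn σ' C := by
  induction C using Finset.induction_on_max generalizing V σ with
  | empty => exact ⟨σ, h, fun x hx ↦ by simp at hx⟩
  | insert a s hlt ih =>
    have ha : a ∈ insert a s := mem_insert_self a s
    have has : a ∉ s := fun has ↦ (hlt a has).false
    have hmax : ∀ x ∈ insert a s, x ≤ a := by
      simpa using fun x hx ↦ (hlt x hx).le
    have hV : V.Nonempty := ⟨σ a, h.bijOn.mapsTo ha⟩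
    have hav : H a (V.max' hV) := hH (h.rel a ha) le_rfl (V.le_max' _ (h.bijOn.mapsTo ha))
    obtain ⟨σ₁, hσ₁⟩ := h.exists_erase hH ha hmax (V.max'_mem hV) hav
    rw [erase_insert has] at hσ₁
    obtain ⟨σ₂, hσ₂, hmono⟩ := ih hσ₁
    refine ⟨_, hσ₂.insert_update has (V.max'_mem hV) hav, ?_⟩
    have heq : EqOn σ₂ (update σ₂ a (V.max' hV)) s := fun x hx ↦
      (update_of_ne (hlt x hx).ne _ _).symm
    rw [coe_insert, strictMonoOn_insert_iff_of_forall_le fun x hx ↦ (hlt x hx).le, update_self]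
    refine ⟨fun b hb _ ↦ ?_, hmono.congr heq⟩
    rw [← heq hb]
    exact V.lt_max'_of_mem_erase_max' hV (hσ₂.bijOn.mapsTo hb)

theorem NoBoardCrossing.mono (hσ : NoBoardCrossing H C σ) (hs : s ⊆ C) : NoBoardCrossing H s σ :=
  fun c hc c' hc' ↦ hσ c (hs hc) c' (hs hc')

theorem NoBoardCrossing.congr (hσ : NoBoardCrossing H C σ) (he : EqOn σ σ' C) :
    NoBoardCrossing H C σ' := by
  intro c hc c' hc' hcc'
  rw [← he hc, ← he hc']
  exact hσ c hc c' hc' hcc'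

theorem exists_isPlacement_noBoardCrossing (hH : IsFerrers H) (h : IsPlacement H C V σ) :
    ∃ σ', IsPlacement H C V σ' ∧ NoBoardCrossing H C σ' := by
  classical
  induction C using Finset.induction_on_max generalizing V σ with
  | empty => exact ⟨σ, h, fun x hx ↦ by simp at hx⟩
  | insert a s hlt ih =>
    have ha : a ∈ insert a s := mem_insert_self a s
    have has : a ∉ s := fun has ↦ (hlt a has).false
    have hmax : ∀ x ∈ insert a s, x ≤ a := by
      simpa using fun x hx ↦ (hlt x hx).le
    have hW : (V.filter (H a)).Nonempty := ⟨σ a, mem_filter.mpr ⟨h.bijOn.mapsTo ha, h.rel a ha⟩⟩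
    obtain ⟨hv, hav⟩ := mem_filter.mp ((V.filter (H a)).min'_mem hW)
    obtain ⟨σ₁, hσ₁⟩ := h.exists_erase hH ha hmax hv hav
    rw [erase_insert has] at hσ₁
    obtain ⟨σ₂, hσ₂, hcross⟩ := ih hσ₁
    refine ⟨_, hσ₂.insert_update has hv hav, fun c hc c' hc' hcc' hlt' ↦ ?_⟩
    have hcs : c ∈ s := (mem_insert.mp hc).resolve_left (hcc'.trans_le (hmax c' hc')).ne
    rw [update_of_ne (hlt c hcs).ne] at hlt' ⊢
    have hσ₂c := hσ₂.bijOn.mapsTo hcs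
    rcases mem_insert.mp hc' with rfl | hc's
    · rw [update_self] at hlt'
      exact fun hH' ↦ hlt'.not_ge ((V.filter (H c')).min'_le _
        (mem_filter.mpr ⟨mem_of_mem_erase hσ₂c, hH'⟩))
    · rw [update_of_ne (hlt c' hc's).ne] at hlt'
      exact hcross c hcs c' hc's hcc' hlt'

theorem NoBoardCrossing.le_of_max (hσ : NoBoardCrossing H C σ) (h : IsPlacement H C V σ)
    (ha : a ∈ C) (hmax : ∀ x ∈ C, x ≤ a) (hv : v ∈ V) (hav : H a v) : σ a ≤ v := by
  obtain ⟨c, hc, rfl⟩ := h.bijOn.surjOn hv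
  by_contra! hlt
  exact hσ c hc a ha ((hmax c hc).lt_of_ne (by rintro rfl; exact hlt.false)) hlt hav

theorem IsPlacement.eqOn_of_noBoardCrossing (h : IsPlacement H C V σ)
    (h' : IsPlacement H C V σ') (hσ : NoBoardCrossing H C σ) (hσ' : NoBoardCrossing H C σ') :
    EqOn σ σ' C := by
  induction C using Finset.induction_on_max generalizing V with
  | empty => simp
  | insert a s hlt ih =>
    have ha : a ∈ insert a s := mem_insert_self a s
    have hmax : ∀ x ∈ insert a s, x ≤ a := by
      simpa using fun x hx ↦ (hlt x hx).le
    have hσa : σ a = σ' a := le_antisymm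
      (hσ.le_of_max h ha hmax (h'.bijOn.mapsTo ha) (h'.rel a ha))
      (hσ'.le_of_max h' ha hmax (h.bijOn.mapsTo ha) (h.rel a ha))
    have hs := erase_insert (s := s) fun has ↦ (hlt a has).false
    have hrest := ih (hs ▸ h.erase ha) (hs ▸ hσa ▸ h'.erase ha)
      (hσ.mono (subset_insert a s)) (hσ'.mono (subset_insert a s))
    intro x hx
    rcases mem_insert.mp hx with rfl | hxs
    · exact hσa
    · exact hrest hxs

theorem Set.BijOn.eqOn_of_strictMonoOn (h : BijOn σ C V) (h' : BijOn σ' C V)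
    (hσ : StrictMonoOn σ C) (hσ' : StrictMonoOn σ' C) : EqOn σ σ' C := by
  have hcard : V.card = C.card := (h.finsetCard_eq σ).symm
  have key : ∀ τ : α → α, BijOn τ C V → StrictMonoOn τ C →
      τ ∘ C.orderEmbOfFin rfl = V.orderEmbOfFin hcard := fun τ hτ hmono ↦
    orderEmbOfFin_unique hcard (fun i ↦ hτ.mapsTo (C.orderEmbOfFin_mem rfl i))
      fun i j hij ↦ hmono (C.orderEmbOfFin_mem rfl i) (C.orderEmbOfFin_mem rfl j)
        ((C.orderEmbOfFin rfl).strictMono hij)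
  intro c hc
  obtain ⟨i, rfl⟩ : c ∈ Set.range (C.orderEmbOfFin rfl) := by rwa [range_orderEmbOfFin]
  exact congrFun ((key σ h hσ).trans (key σ' h' hσ').symm) i

end Placement

section Arcs

variable {α : Type*} [LinearOrder α] {f σ : α → α} {i j x : α}

def ArcIn (f : α → α) (i j : α) : Prop :=
  ∃ a, i < a ∧ a < f a ∧ f a < j

theorem ArcIn.lt (h : ArcIn f i j) : i < j :=
  let ⟨_, hi, ha, hj⟩ := h
  (hi.trans ha).trans hj

theorem isFerrers_arcIn : IsFerrers (ArcIn f) :=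
  fun _ _ _ _ ⟨a, hi, ha, hj⟩ hc hv ↦ ⟨a, hc.trans_lt hi, ha, hj.trans_le hv⟩

variable [Fintype α]

theorem ArcIn.exists_innermost (h : ArcIn f i j) :
    ∃ a, i < a ∧ a < f a ∧ f a < j ∧ ¬ ArcIn f a (f a) := by
  obtain ⟨a₀, ha₀⟩ := h
  obtain ⟨a, ha, hmin⟩ := (univ.filter fun a ↦ i < a ∧ a < f a ∧ f a < j).exists_min_image f
    ⟨a₀, by simpa using ha₀⟩
  simp only [mem_filter, Finset.mem_univ, true_and] at ha hmin
  -- an arc inside `(a, f a)` would end before `f a`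
  refine ⟨a, ha.1, ha.2.1, ha.2.2, fun ⟨b, hab, hb, hba⟩ ↦ ?_⟩
  exact hba.not_ge (hmin b ⟨ha.1.trans hab, hb, hba.trans ha.2.2⟩)

instance (f : α → α) (i j : α) : Decidable (ArcIn f i j) := by
  unfold ArcIn; infer_instance

def outerOpeners (f : α → α) : Finset α := univ.filter fun x ↦ ArcIn f x (f x)

def outerClosers (f : α → α) : Finset α := univ.filter fun x ↦ ArcIn f (f x) x

@[simp]
theorem mem_outerOpeners : x ∈ outerOpeners f ↔ ArcIn f x (f x) := by
  simp [outerOpeners]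

@[simp]
theorem mem_outerClosers : x ∈ outerClosers f ↔ ArcIn f (f x) x := by
  simp [outerClosers]

theorem notMem_outerClosers_of_mem_outerOpeners (hx : x ∈ outerOpeners f) :
    x ∉ outerClosers f :=
  fun hx' ↦ (mem_outerOpeners.mp hx).lt.asymm (mem_outerClosers.mp hx').lt

theorem isPlacement_outerOpeners (hf : Involutive f) :
    IsPlacement (ArcIn f) (outerOpeners f) (outerClosers f) f where
  bijOn := InvOn.bijOn ⟨fun x _ ↦ hf x, fun x _ ↦ hf x⟩
    (fun x hx ↦ by simpa [hf x] using hx) (fun x hx ↦ by simpa [hf x] using hx)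
  rel _ hc := mem_outerOpeners.mp hc

/-- `⟨x⟩` only supplies the `Nonempty α` instance required by `invFunOn`: when `σ` is a placement,
every closer has a preimage among the openers. -/
noncomputable def rematch (f σ : α → α) (x : α) : α :=
  if x ∈ outerOpeners f then σ x
  else if x ∈ outerClosers f then @invFunOn _ _ ⟨x⟩ σ (outerOpeners f) x
  else f x

theorem rematch_of_mem_outerOpeners (hx : x ∈ outerOpeners f) : rematch f σ x = σ x :=
  if_pos hx

theorem rematch_of_notMem (h₁ : x ∉ outerOpeners f) (h₂ : x ∉ outerClosers f) :
    rematch f σ x = f x := by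
  rw [rematch, if_neg h₁, if_neg h₂]

section

variable (hσ : IsPlacement (ArcIn f) (outerOpeners f) (outerClosers f) σ)
include hσ

theorem rematch_of_mem_outerClosers (hx : x ∈ outerClosers f) :
    rematch f σ x ∈ outerOpeners f ∧ σ (rematch f σ x) = x := by
  have : Nonempty α := ⟨x⟩
  have hex := hσ.bijOn.surjOn hx
  rw [rematch, if_neg fun h ↦ notMem_outerClosers_of_mem_outerOpeners h hx, if_pos hx]
  exact ⟨invFunOn_mem hex, invFunOn_eq hex⟩

theorem rematch_lt_of_mem_outerClosers (hx : x ∈ outerClosers f) : rematch f σ x < x := by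
  obtain ⟨hc, hσc⟩ := rematch_of_mem_outerClosers hσ hx
  simpa [hσc] using (hσ.rel _ hc).lt

theorem rematch_involutive (hf : Involutive f) : Involutive (rematch f σ) := by
  intro x
  by_cases hC : x ∈ outerOpeners f
  · have hV := hσ.bijOn.mapsTo hC
    rw [rematch_of_mem_outerOpeners hC]
    obtain ⟨hc, hσc⟩ := rematch_of_mem_outerClosers hσ hV
    exact hσ.bijOn.injOn hc hC hσc
  by_cases hV : x ∈ outerClosers f
  · obtain ⟨hc, hσc⟩ := rematch_of_mem_outerClosers hσ hV
    rw [rematch_of_mem_outerOpeners hc, hσc]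
  · rw [rematch_of_notMem hC hV, rematch_of_notMem (by simpa [hf x] using hV)
      (by simpa [hf x] using hC), hf x]

theorem arcIn_rematch : ArcIn (rematch f σ) = ArcIn f := by
  ext i j
  constructor
  · rintro ⟨a, hia, ha, haj⟩
    by_cases hC : a ∈ outerOpeners f
    · rw [rematch_of_mem_outerOpeners hC] at ha haj
      obtain ⟨b, hab, hb, hba⟩ := hσ.rel a hC
      exact ⟨b, hia.trans hab, hb, hba.trans haj⟩
    by_cases hV : a ∈ outerClosers f
    · exact absurd ha (rematch_lt_of_mem_outerClosers hσ hV).not_gt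
    · rw [rematch_of_notMem hC hV] at ha haj
      exact ⟨a, hia, ha, haj⟩
  · intro h
    -- innermost arcs are not rematched
    obtain ⟨a, hia, ha, haj, hinner⟩ := h.exists_innermost
    have hV : a ∉ outerClosers f := fun hV ↦ (mem_outerClosers.mp hV).lt.asymm ha
    rw [← rematch_of_notMem (σ := σ) (mem_outerOpeners.not.mpr hinner) hV] at ha haj
    exact ⟨a, hia, ha, haj⟩

theorem outerOpeners_rematch : outerOpeners (rematch f σ) = outerOpeners f := by
  ext x
  simp only [mem_outerOpeners, arcIn_rematch hσ]
  by_cases hC : x ∈ outerOpeners f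
  · rw [rematch_of_mem_outerOpeners hC]
    exact iff_of_true (hσ.rel x hC) (mem_outerOpeners.mp hC)
  by_cases hV : x ∈ outerClosers f
  · exact iff_of_false (fun h ↦ h.lt.not_gt (rematch_lt_of_mem_outerClosers hσ hV))
      (mem_outerOpeners.not.mp hC)
  · rw [rematch_of_notMem hC hV]

theorem outerClosers_rematch : outerClosers (rematch f σ) = outerClosers f := by
  ext x
  simp only [mem_outerClosers, arcIn_rematch hσ]
  by_cases hC : x ∈ outerOpeners f
  · rw [rematch_of_mem_outerOpeners hC]
    exact iff_of_false (fun h ↦ h.lt.not_gt (hσ.rel x hC).lt)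
      (mem_outerClosers.not.mp (notMem_outerClosers_of_mem_outerOpeners hC))
  by_cases hV : x ∈ outerClosers f
  · obtain ⟨hc, hσc⟩ := rematch_of_mem_outerClosers hσ hV
    exact iff_of_true (by simpa [hσc] using hσ.rel _ hc) (mem_outerClosers.mp hV)
  · rw [rematch_of_notMem hC hV]

end

/-- The values of `f` on outer openers and closers are forgotten (replaced by the identity). -/
def skeleton (f : α → α) : (α → α → Prop) × Finset α × Finset α × (α → α) :=
  (ArcIn f, outerOpeners f, outerClosers f,
    fun x ↦ if x ∈ outerOpeners f ∪ outerClosers f then x else f x)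

theorem skeleton_rematch (hσ : IsPlacement (ArcIn f) (outerOpeners f) (outerClosers f) σ) :
    skeleton (rematch f σ) = skeleton f := by
  simp only [skeleton, arcIn_rematch hσ, outerOpeners_rematch hσ, outerClosers_rematch hσ]
  congr 3
  funext x
  split_ifs with h
  · rfl
  · simp only [Finset.mem_union, not_or] at h
    exact rematch_of_notMem h.1 h.2

theorem eq_of_skeleton_eq {g : α → α} (hf : Involutive f) (hg : Involutive g)
    (hs : skeleton f = skeleton g) (hfg : EqOn f g (outerOpeners f)) : f = g := by
  simp only [skeleton, Prod.mk.injEq] at hs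
  obtain ⟨-, hC, hV, hoff⟩ := hs
  funext x
  by_cases hxC : x ∈ outerOpeners f
  · exact hfg hxC
  by_cases hxV : x ∈ outerClosers f
  · have hfx : f x ∈ outerOpeners f := by simpa [hf x] using hxV
    calc f x = g (g (f x)) := (hg _).symm
      _ = g x := by rw [← hfg hfx, hf x]
  · simpa [hxC, hxV, ← hC, ← hV] using congrFun hoff x

end Arcs

section Counting

open Equiv

variable {α : Type*} [LinearOrder α] [Fintype α]

theorem ncard_involutions_eq_ncard_skeletons
    (P : (α → α → Prop) → Finset α → (α → α) → Prop)
    (hex : ∀ {H C V σ}, IsFerrers H → IsPlacement H C V σ →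
      ∃ σ', IsPlacement H C V σ' ∧ P H C σ')
    (huniq : ∀ {H C V σ σ'}, IsPlacement H C V σ → IsPlacement H C V σ' → P H C σ →
      P H C σ' → EqOn σ σ' C)
    (hcongr : ∀ {H C σ σ'}, P H C σ → EqOn σ σ' C → P H C σ') :
    {π : Perm α | Involutive π ∧ P (ArcIn π) (outerOpeners π) π}.ncard =
      (skeleton '' {f : α → α | Involutive f}).ncard := by
  set S := {π : Perm α | Involutive π ∧ P (ArcIn π) (outerOpeners π) π}
  have himage : (fun π : Perm α ↦ skeleton π) '' S = skeleton '' {f | Involutive f} := by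
    refine Subset.antisymm (image_subset_iff.mpr fun π hπ ↦ ⟨π, hπ.1, rfl⟩) ?_
    rintro _ ⟨f, hf, rfl⟩
    obtain ⟨σ, hσ, hP⟩ := hex isFerrers_arcIn (isPlacement_outerOpeners hf)
    have hρ := rematch_involutive hσ hf
    refine ⟨hρ.toPerm _, ⟨hρ, ?_⟩, skeleton_rematch hσ⟩
    simp only [Involutive.coe_toPerm, arcIn_rematch hσ, outerOpeners_rematch hσ]
    exact hcongr hP fun x hx ↦ (rematch_of_mem_outerOpeners hx).symm
  have hinj : InjOn (fun π : Perm α ↦ skeleton π) S := by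
    intro π₁ h₁ π₂ h₂ hs
    have hs' := hs
    simp only [skeleton, Prod.mk.injEq] at hs'
    obtain ⟨hA, hC, hV, -⟩ := hs'
    have hp₂ := isPlacement_outerOpeners h₂.1
    rw [← hA, ← hC, ← hV] at hp₂
    have hP₂ := h₂.2
    rw [← hA, ← hC] at hP₂
    exact DFunLike.coe_injective <| eq_of_skeleton_eq h₁.1 h₂.1 hs <|
      huniq (isPlacement_outerOpeners h₁.1) hp₂ h₁.2 hP₂
  rw [← himage, hinj.ncard_image]

theorem ncard_strictMonoOn_eq_ncard_skeletons :
    {π : Perm α | Involutive π ∧ StrictMonoOn π (outerOpeners π)}.ncard =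
      (skeleton '' {f : α → α | Involutive f}).ncard :=
  ncard_involutions_eq_ncard_skeletons (fun _ C σ ↦ StrictMonoOn σ C)
    (fun hH h ↦ exists_isPlacement_strictMonoOn hH h)
    (fun h h' hσ hσ' ↦ h.bijOn.eqOn_of_strictMonoOn h'.bijOn hσ hσ') (fun hσ he ↦ hσ.congr he)

theorem ncard_noBoardCrossing_eq_ncard_skeletons :
    {π : Perm α | Involutive π ∧ NoBoardCrossing (ArcIn π) (outerOpeners π) π}.ncard =
      (skeleton '' {f : α → α | Involutive f}).ncard :=
  ncard_involutions_eq_ncard_skeletons NoBoardCrossing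
    (fun hH h ↦ exists_isPlacement_noBoardCrossing hH h)
    (fun h h' hσ hσ' ↦ h.eqOn_of_noBoardCrossing h' hσ hσ') (fun hσ he ↦ hσ.congr he)

end Counting

section Patterns

variable {α : Type*} [LinearOrder α] {f : α → α}

def HasNestedTriple (f : α → α) : Prop :=
  ∃ i j, i < j ∧ f j < f i ∧ ArcIn f j (f j)

def HasFilledCrossing (f : α → α) : Prop :=
  ∃ i j, i < j ∧ f i < f j ∧ ArcIn f j (f i)

variable [Fintype α]

theorem not_hasNestedTriple_iff (hf : Injective f) :
    ¬ HasNestedTriple f ↔ StrictMonoOn f (outerOpeners f) := by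
  refine ⟨fun h c hc c' hc' hcc' ↦ ?_, ?_⟩
  · exact (lt_or_gt_of_ne (hf.ne hcc'.ne)).resolve_right
      fun hlt ↦ h ⟨c, c', hcc', hlt, mem_outerOpeners.mp hc'⟩
  · rintro h ⟨i, j, hij, hji, hj⟩
    have hi : i ∈ outerOpeners f := mem_outerOpeners.mpr (isFerrers_arcIn hj hij.le hji.le)
    exact (h hi (mem_outerOpeners.mpr hj) hij).not_gt hji

theorem not_hasFilledCrossing_iff :
    ¬ HasFilledCrossing f ↔ NoBoardCrossing (ArcIn f) (outerOpeners f) f := by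
  refine ⟨fun h c _ c' _ hcc' hlt hA ↦ h ⟨c, c', hcc', hlt, hA⟩, ?_⟩
  rintro h ⟨i, j, hij, hlt, hA⟩
  exact h i (mem_outerOpeners.mpr (isFerrers_arcIn hA hij.le le_rfl)) j
    (mem_outerOpeners.mpr (isFerrers_arcIn hA le_rfl hlt.le)) hij hlt hA

end Patterns

theorem Fin.strictMono_six_iff {β : Type*} [Preorder β] (g : Fin 6 → β) :
    StrictMono g ↔ g 0 < g 1 ∧ g 1 < g 2 ∧ g 2 < g 3 ∧ g 3 < g 4 ∧ g 4 < g 5 := by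
  simp [Fin.strictMono_iff_lt_succ, Fin.forall_fin_succ]

theorem Equiv.Perm.inv_eq_self_iff_involutive {α : Type*} {π : Perm α} :
    π⁻¹ = π ↔ Involutive π := by
  rw [inv_eq_iff_mul_eq_one, Perm.ext_iff]
  simp [Involutive]

section PermPatterns

variable {n : ℕ} {π : Equiv.Perm (Fin n)}

theorem permContains_iff_exists_strictMono {k : ℕ} (τ : Equiv.Perm (Fin k)) :
    PermContains π τ ↔ ∃ f : Fin k → Fin n, StrictMono f ∧ StrictMono (π ∘ f ∘ τ.symm) := by
  refine exists_congr fun f ↦ and_congr_right fun _ ↦ ⟨fun h i j hij ↦ ?_, fun h a b ↦ ?_⟩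
  · simpa using (h (τ.symm i) (τ.symm j)).mp (by simpa using hij)
  · simpa using (h.lt_iff_lt (a := τ a) (b := τ b)).symm

theorem permContains_p654321_iff_exists : PermContains π p654321 ↔ ∃ g : Fin 6 → Fin n,
    StrictMono g ∧ π (g 5) < π (g 4) ∧ π (g 4) < π (g 3) ∧ π (g 3) < π (g 2) ∧
      π (g 2) < π (g 1) ∧ π (g 1) < π (g 0) := by
  rw [permContains_iff_exists_strictMono]
  simp only [Fin.strictMono_six_iff (π ∘ _ ∘ _)]
  rfl

theorem permContains_p564312_iff_exists : PermContains π p564312 ↔ ∃ g : Fin 6 → Fin n,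
    StrictMono g ∧ π (g 4) < π (g 5) ∧ π (g 5) < π (g 3) ∧ π (g 3) < π (g 2) ∧
      π (g 2) < π (g 0) ∧ π (g 0) < π (g 1) := by
  rw [permContains_iff_exists_strictMono]
  simp only [Fin.strictMono_six_iff (π ∘ _ ∘ _)]
  rfl

theorem permContains_p654321_iff (hπ : Involutive π) :
    PermContains π p654321 ↔ HasNestedTriple π := by
  rw [permContains_p654321_iff_exists]
  constructor
  · rintro ⟨g, hg, h54, h43, h32, h21, h10⟩
    obtain ⟨m01, m12, m23, m34, m45⟩ := (Fin.strictMono_six_iff g).mp hg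
    -- either `g 2` opens an arc inside those of `g 0` and `g 1`, or `g 3`, `g 4`, `g 5` close arcs
    by_cases h2 : g 2 < π (g 2)
    · exact ⟨g 0, g 1, m01, h10, g 2, m12, h2, h21⟩
    · refine ⟨π (g 5), π (g 4), h54, by rwa [hπ, hπ], π (g 3), h43, ?_, ?_⟩
      · rw [hπ]
        exact (h32.trans_le (not_lt.mp h2)).trans m23
      · rwa [hπ, hπ]
  · rintro ⟨i, j, hij, hji, a, hja, ha, haj⟩
    refine ⟨![i, j, a, π a, π j, π i], ?_⟩
    simp [hπ _, *]

theorem permContains_p564312_iff (hπ : Involutive π) :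
    PermContains π p564312 ↔ HasFilledCrossing π := by
  rw [permContains_p564312_iff_exists]
  constructor
  · rintro ⟨g, hg, h45, h53, h32, h20, h01⟩
    obtain ⟨m01, m12, m23, m34, m45⟩ := (Fin.strictMono_six_iff g).mp hg
    obtain ⟨c, hc, hc1, hc4, hc5, hc0⟩ : ∃ c, π c ≠ c ∧ g 1 < c ∧ c < g 4 ∧
        π (g 5) < π c ∧ π c < π (g 0) := by
      by_cases h2 : π (g 2) = g 2
      · refine ⟨g 3, fun h3 ↦ ?_, m12.trans m23, m34, h53, h32.trans h20⟩
        exact (h32.trans_eq h2).not_gt (by rwa [h3])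
      · exact ⟨g 2, h2, m12, m23.trans m34, h53.trans h32, h20⟩
    -- the arc through `c` lies inside the crossing of the arcs through `g 4`, `g 5` or `g 0`, `g 1`
    rcases lt_or_gt_of_ne hc with hc | hc
    · refine ⟨π (g 4), π (g 5), h45, by rwa [hπ, hπ], π c, hc5, by rwa [hπ], by rwa [hπ, hπ]⟩
    · exact ⟨g 0, g 1, m01, h01, c, hc1, hc, hc0⟩
  · rintro ⟨i, j, hij, hij', a, hja, ha, hai⟩
    refine ⟨![i, j, a, π a, π i, π j], ?_⟩
    simp [hπ _, *]

end PermPatterns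

/-- |I_n(654321)| = |I_n(564312)| for every n ≥ 1. -/
theorem stmt7 : ∀ n : ℕ, 1 ≤ n → IAvoidCount n p654321 = IAvoidCount n p564312 := by
  intro n _
  have hA : {π : Equiv.Perm (Fin n) | π⁻¹ = π ∧ ¬ PermContains π p654321} =
      {π : Equiv.Perm (Fin n) | Involutive π ∧ StrictMonoOn π (outerOpeners π)} := by
    ext π
    simp only [mem_ofPred_eq, Equiv.Perm.inv_eq_self_iff_involutive]
    exact and_congr_right fun hπ ↦
      (permContains_p654321_iff hπ).not.trans (not_hasNestedTriple_iff hπ.injective)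
  have hB : {π : Equiv.Perm (Fin n) | π⁻¹ = π ∧ ¬ PermContains π p564312} =
      {π : Equiv.Perm (Fin n) | Involutive π ∧ NoBoardCrossing (ArcIn π) (outerOpeners π) π} := by
    ext π
    simp only [mem_ofPred_eq, Equiv.Perm.inv_eq_self_iff_involutive]
    exact and_congr_right fun hπ ↦
      (permContains_p564312_iff hπ).not.trans not_hasFilledCrossing_iff
  rw [IAvoidCount, IAvoidCount, hA, hB, ncard_strictMonoOn_eq_ncard_skeletons,
    ncard_noBoardCrossing_eq_ncard_skeletons]
end

section
/- Let χ₁ and χ₂ be signed permutation matrices and set θ = [[χ₁,0],[0,χ₂]] and ω = [[χ₁,0],[0,−χ₂]] (block diagonal matrices, where −χ₂ has all entries negated). Then for every Young diagram λ and every set S of cells of λ containing at most one cell in each row and each column, the number of θ-avoiding sparse fillings of λ whose set of cells carrying a nonzero entry is exactly S equals the number of ω-avoiding sparse fillings of λ whose set of cells carrying a nonzero entry is exactly S. In particular, θ and ω are shape Wilf equivalent. -/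
open Matrix

/-- A signed permutation matrix: entries in {0,1,-1}, with exactly one nonzero
entry in each row and each column. -/
def IsSignedPermMatrix {n : ℕ} (M : Matrix (Fin n) (Fin n) ℤ) : Prop :=
  (∀ i j, M i j = 0 ∨ M i j = 1 ∨ M i j = -1) ∧
  (∀ i, ∃! j, M i j ≠ 0) ∧
  (∀ j, ∃! i, M i j ≠ 0)

/-- `M` contains the pattern `τ`: some `k×k` submatrix of `M`, taken with rows
and columns in increasing order, equals `τ`. -/
def ContainsPattern {n k : ℕ} (M : Matrix (Fin n) (Fin n) ℤ)
    (τ : Matrix (Fin k) (Fin k) ℤ) : Prop :=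
  ∃ r c : Fin k → Fin n, StrictMono r ∧ StrictMono c ∧
    ∀ a b, M (r a) (c b) = τ a b

/-- Block diagonal matrix [[A,0],[0,B]]. -/
def blockDiag2 {a b : ℕ} (A : Matrix (Fin a) (Fin a) ℤ) (B : Matrix (Fin b) (Fin b) ℤ) :
    Matrix (Fin (a + b)) (Fin (a + b)) ℤ :=
  Matrix.reindex finSumFinEquiv finSumFinEquiv
    (Matrix.fromBlocks A (0 : Matrix (Fin a) (Fin b) ℤ) (0 : Matrix (Fin b) (Fin a) ℤ) B)

/-- Block diagonal matrix with three blocks. -/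
def blockDiag3 {a b c : ℕ} (A : Matrix (Fin a) (Fin a) ℤ) (B : Matrix (Fin b) (Fin b) ℤ)
    (C : Matrix (Fin c) (Fin c) ℤ) : Matrix (Fin (a + b + c)) (Fin (a + b + c)) ℤ :=
  blockDiag2 (blockDiag2 A B) C

/-- Block antidiagonal matrix [[0,A],[B,0]]. -/
def antiBlock2 {a b : ℕ} (A : Matrix (Fin a) (Fin a) ℤ) (B : Matrix (Fin b) (Fin b) ℤ) :
    Matrix (Fin (a + b)) (Fin (a + b)) ℤ :=
  Matrix.reindex finSumFinEquiv (finSumFinEquiv.trans (finCongr (Nat.add_comm b a)))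
    (Matrix.fromBlocks (0 : Matrix (Fin a) (Fin b) ℤ) A B (0 : Matrix (Fin b) (Fin a) ℤ))

/-- For a signed permutation matrix σ, the involution σ' = [[0,σ],[σᵗ,0]]. -/
def primePat {k : ℕ} (σ : Matrix (Fin k) (Fin k) ℤ) :
    Matrix (Fin (k + k)) (Fin (k + k)) ℤ :=
  Matrix.reindex finSumFinEquiv finSumFinEquiv
    (Matrix.fromBlocks (0 : Matrix (Fin k) (Fin k) ℤ) σ σ.transpose
      (0 : Matrix (Fin k) (Fin k) ℤ))

/-- For a signed permutation matrix σ, the involution σ'' = [[0,0,σ],[0,1,0],[σᵗ,0,0]]. -/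
def doublePrimePat {k : ℕ} (σ : Matrix (Fin k) (Fin k) ℤ) :
    Matrix (Fin (k + (1 + k))) (Fin (k + (1 + k))) ℤ :=
  Matrix.reindex ((Equiv.sumCongr (Equiv.refl (Fin k)) finSumFinEquiv).trans finSumFinEquiv)
    ((Equiv.sumCongr (Equiv.refl (Fin k)) finSumFinEquiv).trans finSumFinEquiv)
    (Matrix.fromBlocks
      (0 : Matrix (Fin k) (Fin k) ℤ)
      (Matrix.of fun (i : Fin k) (j : Fin 1 ⊕ Fin k) =>
        Sum.elim (fun _ => (0 : ℤ)) (fun j' => σ i j') j)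
      (Matrix.of fun (i : Fin 1 ⊕ Fin k) (j : Fin k) =>
        Sum.elim (fun _ => (0 : ℤ)) (fun i' => σ.transpose i' j) i)
      (Matrix.fromBlocks (1 : Matrix (Fin 1) (Fin 1) ℤ) 0 0 (0 : Matrix (Fin k) (Fin k) ℤ)))

/-- β_k, the antidiagonal k×k permutation matrix (pattern k(k-1)…1). -/
def betaMat (k : ℕ) : Matrix (Fin k) (Fin k) ℤ :=
  Matrix.of fun i j => if (i : ℕ) + (j : ℕ) + 1 = k then 1 else 0

/-- |SI_n(τ)|: the number of τ-avoiding signed involutions of size n. -/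
noncomputable def SIAvoidCount (n : ℕ) {k : ℕ} (τ : Matrix (Fin k) (Fin k) ℤ) : ℕ :=
  {M : Matrix (Fin n) (Fin n) ℤ |
    IsSignedPermMatrix M ∧ M.IsSymm ∧ ¬ ContainsPattern M τ}.ncard

/-- |B_n(τ)|: the number of τ-avoiding signed permutations of size n. -/
noncomputable def BAvoidCount (n : ℕ) {k : ℕ} (τ : Matrix (Fin k) (Fin k) ℤ) : ℕ :=
  {M : Matrix (Fin n) (Fin n) ℤ | IsSignedPermMatrix M ∧ ¬ ContainsPattern M τ}.ncard

/-- A sparse filling of a Young diagram: values in {0,1,-1}, supported on the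
cells of the diagram, with at most one nonzero entry in each row and column. -/
def IsSparseFilling (μ : YoungDiagram) (f : ℕ × ℕ → ℤ) : Prop :=
  (∀ p, f p ≠ 0 → p ∈ μ.cells) ∧
  (∀ p, f p = 0 ∨ f p = 1 ∨ f p = -1) ∧
  (∀ i, {j : ℕ | f (i, j) ≠ 0}.Subsingleton) ∧
  (∀ j, {i : ℕ | f (i, j) ≠ 0}.Subsingleton)

/-- A signed transversal of a Young diagram: a sparse filling with exactly one
nonzero entry in every (nonempty) row and column. -/
def IsSignedTransversal (μ : YoungDiagram) (f : ℕ × ℕ → ℤ) : Prop :=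
  IsSparseFilling μ f ∧
  (∀ i, (∃ j, (i, j) ∈ μ.cells) → ∃ j, f (i, j) ≠ 0) ∧
  (∀ j, (∃ i, (i, j) ∈ μ.cells) → ∃ i, f (i, j) ≠ 0)

/-- A filling of a Young diagram contains the pattern τ. -/
def YDContains (μ : YoungDiagram) (f : ℕ × ℕ → ℤ) {k : ℕ}
    (τ : Matrix (Fin k) (Fin k) ℤ) : Prop :=
  ∃ r c : Fin k → ℕ, StrictMono r ∧ StrictMono c ∧
    (∀ a b, (r a, c b) ∈ μ.cells) ∧ (∀ a b, f (r a, c b) = τ a b)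

/-- Shape Wilf equivalence of two signed permutation matrices. -/
def ShapeWilfEquiv {k l : ℕ} (σ : Matrix (Fin k) (Fin k) ℤ)
    (τ : Matrix (Fin l) (Fin l) ℤ) : Prop :=
  ∀ μ : YoungDiagram,
    {f : ℕ × ℕ → ℤ | IsSignedTransversal μ f ∧ ¬ YDContains μ f σ}.ncard =
    {f : ℕ × ℕ → ℤ | IsSignedTransversal μ f ∧ ¬ YDContains μ f τ}.ncard


namespace SW8

set_option maxRecDepth 4000

variable {a b : ℕ} (A : Matrix (Fin a) (Fin a) ℤ) (B : Matrix (Fin b) (Fin b) ℤ)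

lemma bd_ll (x y : Fin a) : blockDiag2 A B (Fin.castAdd b x) (Fin.castAdd b y) = A x y := by
  simp [blockDiag2]

lemma bd_lr (x : Fin a) (y : Fin b) :
    blockDiag2 A B (Fin.castAdd b x) (Fin.natAdd a y) = 0 := by
  simp [blockDiag2]

lemma bd_rl (x : Fin b) (y : Fin a) :
    blockDiag2 A B (Fin.natAdd a x) (Fin.castAdd b y) = 0 := by
  simp [blockDiag2]

lemma bd_rr (x y : Fin b) : blockDiag2 A B (Fin.natAdd a x) (Fin.natAdd a y) = B x y := by
  simp [blockDiag2]

lemma castAdd_strictMono : StrictMono (Fin.castAdd b : Fin a → Fin (a + b)) :=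
  Fin.strictMono_castAdd b

lemma natAdd_strictMono : StrictMono (Fin.natAdd a : Fin b → Fin (a + b)) :=
  Fin.strictMono_natAdd a

lemma castAdd_lt_natAdd (x : Fin a) (y : Fin b) :
    (Fin.castAdd b x) < (Fin.natAdd a y) := by
  simp only [Fin.lt_def, Fin.coe_castAdd, Fin.coe_natAdd]
  exact x.isLt.trans_le (Nat.le_add_right a y)

/-- combine two increasing sequences -/
noncomputable def combineSeq (u : Fin a → ℕ) (v : Fin b → ℕ) : Fin (a + b) → ℕ :=
  fun i => Sum.elim u v (finSumFinEquiv.symm i)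

lemma combineSeq_castAdd (u : Fin a → ℕ) (v : Fin b → ℕ) (x : Fin a) :
    combineSeq u v (Fin.castAdd b x) = u x := by simp [combineSeq]

lemma combineSeq_natAdd (u : Fin a → ℕ) (v : Fin b → ℕ) (x : Fin b) :
    combineSeq u v (Fin.natAdd a x) = v x := by simp [combineSeq]

lemma combineSeq_strictMono {u : Fin a → ℕ} {v : Fin b → ℕ} (hu : StrictMono u)
    (hv : StrictMono v) (huv : ∀ x y, u x < v y) : StrictMono (combineSeq u v) := by
  intro i j hij
  induction i using Fin.addCases with
  | left x =>
    induction j using Fin.addCases with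
    | left y =>
      rw [combineSeq_castAdd, combineSeq_castAdd]
      exact hu ((Fin.strictMono_castAdd b).lt_iff_lt.1 hij)
    | right y =>
      rw [combineSeq_castAdd, combineSeq_natAdd]; exact huv x y
  | right x =>
    induction j using Fin.addCases with
    | left y =>
      exact absurd hij (not_lt.2 (castAdd_lt_natAdd y x).le)
    | right y =>
      rw [combineSeq_natAdd, combineSeq_natAdd]
      exact hv ((Fin.strictMono_natAdd a).lt_iff_lt.1 hij)

def Occ (μ : YoungDiagram) (f : ℕ × ℕ → ℤ) {k : ℕ} (τ : Matrix (Fin k) (Fin k) ℤ)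
    (r c : Fin k → ℕ) : Prop :=
  StrictMono r ∧ StrictMono c ∧ (∀ x y, (r x, c y) ∈ μ.cells) ∧ (∀ x y, f (r x, c y) = τ x y)

def YDContains' (μ : YoungDiagram) (f : ℕ × ℕ → ℤ) {k : ℕ}
    (τ : Matrix (Fin k) (Fin k) ℤ) : Prop := ∃ r c, Occ μ f τ r c

def Flip (μ : YoungDiagram) {a : ℕ} (χ : Matrix (Fin a) (Fin a) ℤ) (f : ℕ × ℕ → ℤ)
    (p : ℕ × ℕ) : Prop :=
  ∃ r c, Occ μ f χ r c ∧ (∀ x, r x < p.1) ∧ (∀ x, c x < p.2)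

open Classical in
noncomputable def gmap (μ : YoungDiagram) {a : ℕ} (χ : Matrix (Fin a) (Fin a) ℤ)
    (f : ℕ × ℕ → ℤ) : ℕ × ℕ → ℤ :=
  fun p => if Flip μ χ f p then -f p else f p

variable {μ : YoungDiagram} {a b : ℕ} {χ : Matrix (Fin a) (Fin a) ℤ} {f : ℕ × ℕ → ℤ}

lemma gmap_of_flip {p : ℕ × ℕ} (h : Flip μ χ f p) : gmap μ χ f p = -f p := by
  simp [gmap, h]

lemma gmap_of_not_flip {p : ℕ × ℕ} (h : ¬ Flip μ χ f p) : gmap μ χ f p = f p := by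
  simp [gmap, h]

lemma gmap_ne_zero {p : ℕ × ℕ} : gmap μ χ f p ≠ 0 ↔ f p ≠ 0 := by
  by_cases h : Flip μ χ f p
  · rw [gmap_of_flip h]; simp
  · rw [gmap_of_not_flip h]

/-- Key lemma: any χ-occurrence can be replaced by an unflipped one, weakly NW of it. -/
lemma unflipped_aux : ∀ n : ℕ, ∀ r c : Fin a → ℕ, (∀ x, r x < n) → Occ μ f χ r c →
    ∃ r' c', Occ μ f χ r' c' ∧ (∀ x y, ¬ Flip μ χ f (r' x, c' y)) ∧
      (∀ x, ∃ y, r' x ≤ r y) ∧ (∀ x, ∃ y, c' x ≤ c y) := by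
  intro n
  induction n using Nat.strong_induction_on with
  | _ n ih =>
    intro r c hrn hocc
    by_cases hfl : ∀ x y, ¬ Flip μ χ f (r x, c y)
    · exact ⟨r, c, hocc, hfl, fun x => ⟨x, le_rfl⟩, fun x => ⟨x, le_rfl⟩⟩
    · push_neg at hfl
      obtain ⟨x0, y0, r2, c2, hocc2, hr2, hc2⟩ := hfl
      obtain ⟨r', c', hocc', hnf, hrb, hcb⟩ :=
        ih (r x0) (hrn x0) r2 c2 hr2 hocc2
      refine ⟨r', c', hocc', hnf, fun x => ⟨x0, ?_⟩, fun x => ⟨y0, ?_⟩⟩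
      · obtain ⟨y, hy⟩ := hrb x; exact hy.trans (hr2 y).le
      · obtain ⟨y, hy⟩ := hcb x; exact hy.trans (hc2 y).le

lemma unflipped {r c : Fin a → ℕ} (hocc : Occ μ f χ r c) :
    ∃ r' c', Occ μ f χ r' c' ∧ (∀ x y, ¬ Flip μ χ f (r' x, c' y)) ∧
      (∀ x, ∃ y, r' x ≤ r y) ∧ (∀ x, ∃ y, c' x ≤ c y) :=
  unflipped_aux (Finset.univ.sup r + 1) r c
    (fun x => Nat.lt_succ_of_le (Finset.le_sup (Finset.mem_univ x))) hocc

lemma flip_gmap_iff {p : ℕ × ℕ} : Flip μ χ (gmap μ χ f) p ↔ Flip μ χ f p := by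
  constructor
  · rintro ⟨r, c, ⟨hr, hc, hcell, hval⟩, hrp, hcp⟩
    by_cases hfl : ∀ x y, ¬ Flip μ χ f (r x, c y)
    · exact ⟨r, c, ⟨hr, hc, hcell, fun x y => by
        rw [← hval x y, gmap_of_not_flip (hfl x y)]⟩, hrp, hcp⟩
    · push_neg at hfl
      obtain ⟨x0, y0, r2, c2, hocc2, hr2, hc2⟩ := hfl
      exact ⟨r2, c2, hocc2, fun x => (hr2 x).trans (hrp x0),
        fun x => (hc2 x).trans (hcp y0)⟩
  · rintro ⟨r, c, hocc, hrp, hcp⟩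
    obtain ⟨r', c', ⟨hr', hc', hcell', hval'⟩, hnf, hrb, hcb⟩ := unflipped hocc
    refine ⟨r', c', ⟨hr', hc', hcell', fun x y => by
      rw [gmap_of_not_flip (hnf x y)]; exact hval' x y⟩, fun x => ?_, fun x => ?_⟩
    · obtain ⟨y, hy⟩ := hrb x; exact hy.trans_lt (hrp y)
    · obtain ⟨y, hy⟩ := hcb x; exact hy.trans_lt (hcp y)

lemma gmap_gmap : gmap μ χ (gmap μ χ f) = f := by
  funext p
  by_cases h : Flip μ χ f p
  · rw [gmap_of_flip (flip_gmap_iff.2 h), gmap_of_flip h, neg_neg]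
  · rw [gmap_of_not_flip (fun h' => h (flip_gmap_iff.1 h')), gmap_of_not_flip h]

lemma gmap_involutive : Function.Involutive (gmap μ χ) := fun _ => gmap_gmap

variable {A : Matrix (Fin a) (Fin a) ℤ} {B : Matrix (Fin b) (Fin b) ℤ}

lemma decompose (h : YDContains' μ f (blockDiag2 A B)) :
    ∃ rO cO rP cP, Occ μ f A rO cO ∧ Occ μ f B rP cP ∧
      (∀ x y, rO x < rP y) ∧ (∀ x y, cO x < cP y) := by
  obtain ⟨r, c, hr, hc, hcell, hval⟩ := h
  refine ⟨fun x => r (Fin.castAdd b x), fun x => c (Fin.castAdd b x),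
    fun x => r (Fin.natAdd a x), fun x => c (Fin.natAdd a x),
    ⟨hr.comp castAdd_strictMono, hc.comp castAdd_strictMono,
      fun x y => hcell _ _, fun x y => by rw [hval]; exact bd_ll A B x y⟩,
    ⟨hr.comp natAdd_strictMono, hc.comp natAdd_strictMono,
      fun x y => hcell _ _, fun x y => by rw [hval]; exact bd_rr A B x y⟩,
    fun x y => hr (castAdd_lt_natAdd x y), fun x y => hc (castAdd_lt_natAdd x y)⟩

lemma reconstruct (hrowsub : ∀ i, {j : ℕ | f (i, j) ≠ 0}.Subsingleton)
    (hA : ∀ i, ∃ j, A i j ≠ 0) (hB : ∀ i, ∃ j, B i j ≠ 0)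
    {rO cO : Fin a → ℕ} {rP cP : Fin b → ℕ}
    (hO : Occ μ f A rO cO) (hP : Occ μ f B rP cP)
    (hr : ∀ x y, rO x < rP y) (hc : ∀ x y, cO x < cP y) :
    YDContains' μ f (blockDiag2 A B) := by
  obtain ⟨hrO, hcO, hOcell, hOval⟩ := hO
  obtain ⟨hrP, hcP, hPcell, hPval⟩ := hP
  refine ⟨combineSeq rO rP, combineSeq cO cP,
    combineSeq_strictMono hrO hrP hr, combineSeq_strictMono hcO hcP hc, ?_, ?_⟩
  · intro x y
    induction x using Fin.addCases with
    | left x =>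
      induction y using Fin.addCases with
      | left y => rw [combineSeq_castAdd, combineSeq_castAdd]; exact hOcell x y
      | right y =>
        rw [combineSeq_castAdd, combineSeq_natAdd]
        rw [YoungDiagram.mem_cells] at *
        exact μ.up_left_mem (hr x y).le le_rfl ((YoungDiagram.mem_cells _).1 (hPcell y y))
    | right x =>
      induction y using Fin.addCases with
      | left y =>
        rw [combineSeq_natAdd, combineSeq_castAdd]
        rw [YoungDiagram.mem_cells]
        exact μ.up_left_mem le_rfl (hc y x).le ((YoungDiagram.mem_cells _).1 (hPcell x x))
      | right y => rw [combineSeq_natAdd, combineSeq_natAdd]; exact hPcell x y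
  · intro x y
    induction x using Fin.addCases with
    | left x =>
      induction y using Fin.addCases with
      | left y => rw [combineSeq_castAdd, combineSeq_castAdd, bd_ll]; exact hOval x y
      | right y =>
        rw [combineSeq_castAdd, combineSeq_natAdd, bd_lr]
        by_contra hne
        obtain ⟨j0, hj0⟩ := hA x
        have h1 : f (rO x, cO j0) ≠ 0 := by rw [hOval]; exact hj0
        have := hrowsub (rO x) hne h1
        exact absurd this.symm (hc j0 y).ne
    | right x =>
      induction y using Fin.addCases with
      | left y =>
        rw [combineSeq_natAdd, combineSeq_castAdd, bd_rl]
        by_contra hne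
        obtain ⟨j0, hj0⟩ := hB x
        have h1 : f (rP x, cP j0) ≠ 0 := by rw [hPval]; exact hj0
        have := hrowsub (rP x) hne h1
        exact absurd this (hc y j0).ne
      | right y => rw [combineSeq_natAdd, combineSeq_natAdd, bd_rr]; exact hPval x y

/-- The main transfer lemma. -/
lemma transfer {χ₂ : Matrix (Fin b) (Fin b) ℤ}
    (hrowsub : ∀ i, {j : ℕ | f (i, j) ≠ 0}.Subsingleton)
    (h1rows : ∀ i, ∃ j, χ i j ≠ 0) (h2rows : ∀ i, ∃ j, χ₂ i j ≠ 0) :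
    YDContains' μ (gmap μ χ f) (blockDiag2 χ (-χ₂)) ↔ YDContains' μ f (blockDiag2 χ χ₂) := by
  have hrowsub' : ∀ i, {j : ℕ | gmap μ χ f (i, j) ≠ 0}.Subsingleton := by
    intro i
    have : {j : ℕ | gmap μ χ f (i, j) ≠ 0} = {j : ℕ | f (i, j) ≠ 0} := by
      ext j; exact gmap_ne_zero
    rw [this]; exact hrowsub i
  have h2rows' : ∀ i, ∃ j, (-χ₂) i j ≠ 0 := by
    intro i; obtain ⟨j, hj⟩ := h2rows i; exact ⟨j, by simpa using hj⟩
  constructor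
  · rintro h
    obtain ⟨rO, cO, rP, cP, hO, hP, hr, hc⟩ := decompose h
    -- get an unflipped χ occurrence (w.r.t. gmap f, i.e. w.r.t. f as well)
    obtain ⟨r', c', ⟨hr', hc', hcell', hval'⟩, hnf, hrb, hcb⟩ := unflipped hO
    -- r', c' is an occurrence in f
    have hOf : Occ μ f χ r' c' := by
      refine ⟨hr', hc', hcell', fun x y => ?_⟩
      have hnf2 : ¬ Flip μ χ f (r' x, c' y) := fun h' => hnf x y (flip_gmap_iff.2 h')
      rw [← gmap_of_not_flip hnf2]; exact hval' x y
    -- P is an occurrence of χ₂ in f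
    obtain ⟨hrP, hcP, hPcell, hPval⟩ := hP
    have hPf : Occ μ f χ₂ rP cP := by
      refine ⟨hrP, hcP, hPcell, fun x y => ?_⟩
      have hfl : Flip μ χ (gmap μ χ f) (rP x, cP y) :=
        ⟨rO, cO, hO, fun z => hr z x, fun z => hc z y⟩
      have hfl' : Flip μ χ f (rP x, cP y) := flip_gmap_iff.1 hfl
      have := gmap_of_flip hfl'
      have h2 := hPval x y
      rw [this] at h2
      have := neg_eq_iff_eq_neg.1 h2.symm
      simpa using this.symm
    refine reconstruct hrowsub h1rows h2rows hOf hPf ?_ ?_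
    · intro x y
      obtain ⟨z, hz⟩ := hrb x; exact hz.trans_lt (hr z y)
    · intro x y
      obtain ⟨z, hz⟩ := hcb x; exact hz.trans_lt (hc z y)
  · rintro h
    obtain ⟨rO, cO, rP, cP, hO, hP, hr, hc⟩ := decompose h
    obtain ⟨r', c', ⟨hr', hc', hcell', hval'⟩, hnf, hrb, hcb⟩ := unflipped hO
    have hOg : Occ μ (gmap μ χ f) χ r' c' := by
      refine ⟨hr', hc', hcell', fun x y => ?_⟩
      rw [gmap_of_not_flip (hnf x y)]; exact hval' x y
    obtain ⟨hrP, hcP, hPcell, hPval⟩ := hP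
    have hPg : Occ μ (gmap μ χ f) (-χ₂) rP cP := by
      refine ⟨hrP, hcP, hPcell, fun x y => ?_⟩
      have hfl : Flip μ χ f (rP x, cP y) :=
        ⟨rO, cO, hO, fun z => hr z x, fun z => hc z y⟩
      rw [gmap_of_flip hfl, hPval x y]; simp
    refine reconstruct hrowsub' h1rows h2rows' hOg hPg ?_ ?_
    · intro x y
      obtain ⟨z, hz⟩ := hrb x; exact hz.trans_lt (hr z y)
    · intro x y
      obtain ⟨z, hz⟩ := hcb x; exact hz.trans_lt (hc z y)


lemma YDContains'_iff {μ : YoungDiagram} {f : ℕ × ℕ → ℤ} {k : ℕ}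
    {τ : Matrix (Fin k) (Fin k) ℤ} :
    YDContains' μ f τ ↔ YDContains μ f τ := Iff.rfl

end SW8

/-- for signed permutation matrices χ₁, χ₂, set θ = [[χ₁,0],[0,χ₂]] and
ω = [[χ₁,0],[0,−χ₂]]. For every Young diagram λ and every set S of cells of λ with at
most one cell in each row and column, the θ-avoiding sparse fillings of λ with nonzero
support exactly S are equinumerous with the ω-avoiding ones; in particular θ and ω are
shape Wilf equivalent. -/
theorem stmt8 {a b : ℕ} (χ₁ : Matrix (Fin a) (Fin a) ℤ) (χ₂ : Matrix (Fin b) (Fin b) ℤ)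
    (h1 : IsSignedPermMatrix χ₁) (h2 : IsSignedPermMatrix χ₂) :
    (∀ (μ : YoungDiagram) (S : Set (ℕ × ℕ)),
      (∀ p ∈ S, p ∈ μ.cells) →
      (∀ i, {j : ℕ | (i, j) ∈ S}.Subsingleton) →
      (∀ j, {i : ℕ | (i, j) ∈ S}.Subsingleton) →
      {f : ℕ × ℕ → ℤ | IsSparseFilling μ f ∧ ¬ YDContains μ f (blockDiag2 χ₁ χ₂) ∧
        {p | f p ≠ 0} = S}.ncard =
      {f : ℕ × ℕ → ℤ | IsSparseFilling μ f ∧ ¬ YDContains μ f (blockDiag2 χ₁ (-χ₂)) ∧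
        {p | f p ≠ 0} = S}.ncard) ∧
    ShapeWilfEquiv (blockDiag2 χ₁ χ₂) (blockDiag2 χ₁ (-χ₂)) := by
  classical
  have h1rows : ∀ i, ∃ j, χ₁ i j ≠ 0 := fun i => (h1.2.1 i).exists
  have h2rows : ∀ i, ∃ j, χ₂ i j ≠ 0 := fun i => (h2.2.1 i).exists
  have key : ∀ (μ : YoungDiagram) (Q : (ℕ × ℕ → ℤ) → Prop),
      (∀ f, Q f → Q (SW8.gmap μ χ₁ f)) →
      (∀ f, Q f → ∀ i, {j : ℕ | f (i, j) ≠ 0}.Subsingleton) →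
      {f : ℕ × ℕ → ℤ | Q f ∧ ¬ YDContains μ f (blockDiag2 χ₁ χ₂)}.ncard =
      {f : ℕ × ℕ → ℤ | Q f ∧ ¬ YDContains μ f (blockDiag2 χ₁ (-χ₂))}.ncard := by
    intro μ Q hQ hQsub
    have himg : SW8.gmap μ χ₁ '' {f : ℕ × ℕ → ℤ | Q f ∧ ¬ YDContains μ f (blockDiag2 χ₁ χ₂)}
        = {f : ℕ × ℕ → ℤ | Q f ∧ ¬ YDContains μ f (blockDiag2 χ₁ (-χ₂))} := by
      ext h
      simp only [Set.mem_image, Set.mem_setOf_eq]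
      constructor
      · rintro ⟨f, ⟨hQf, hav⟩, rfl⟩
        refine ⟨hQ f hQf, fun hcon => hav ?_⟩
        rw [← SW8.YDContains'_iff] at hcon ⊢
        exact (SW8.transfer (hQsub f hQf) h1rows h2rows).1 hcon
      · rintro ⟨hQh, hav⟩
        refine ⟨SW8.gmap μ χ₁ h, ⟨hQ h hQh, fun hcon => hav ?_⟩, SW8.gmap_gmap⟩
        rw [← SW8.YDContains'_iff] at hcon ⊢
        have := (SW8.transfer (hQsub _ (hQ h hQh)) h1rows h2rows).2 hcon
        rwa [SW8.gmap_gmap] at this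
    rw [← himg, Set.ncard_image_of_injective _ SW8.gmap_involutive.injective]
  have hgsupp : ∀ (μ : YoungDiagram) (f : ℕ × ℕ → ℤ),
      {p : ℕ × ℕ | SW8.gmap μ χ₁ f p ≠ 0} = {p : ℕ × ℕ | f p ≠ 0} := by
    intro μ f; ext p; exact SW8.gmap_ne_zero
  have hgsparse : ∀ (μ : YoungDiagram) (f : ℕ × ℕ → ℤ), IsSparseFilling μ f →
      IsSparseFilling μ (SW8.gmap μ χ₁ f) := by
    intro μ f hf
    refine ⟨fun p hp => hf.1 p (SW8.gmap_ne_zero.1 hp), fun p => ?_, fun i => ?_, fun j => ?_⟩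
    · by_cases hfl : SW8.Flip μ χ₁ f p
      · rw [SW8.gmap_of_flip hfl]
        rcases hf.2.1 p with h | h | h <;> simp [h]
      · rw [SW8.gmap_of_not_flip hfl]; exact hf.2.1 p
    · have : {j : ℕ | SW8.gmap μ χ₁ f (i, j) ≠ 0} = {j : ℕ | f (i, j) ≠ 0} := by
        ext j; exact SW8.gmap_ne_zero
      rw [this]; exact hf.2.2.1 i
    · have : {i : ℕ | SW8.gmap μ χ₁ f (i, j) ≠ 0} = {i : ℕ | f (i, j) ≠ 0} := by
        ext i; exact SW8.gmap_ne_zero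
      rw [this]; exact hf.2.2.2 j
  constructor
  · intro μ S hS hrow hcol
    have e1 : ∀ (τ : Matrix (Fin (a + b)) (Fin (a + b)) ℤ),
        {f : ℕ × ℕ → ℤ | IsSparseFilling μ f ∧ ¬ YDContains μ f τ ∧ {p | f p ≠ 0} = S}
        = {f : ℕ × ℕ → ℤ | (IsSparseFilling μ f ∧ {p | f p ≠ 0} = S) ∧ ¬ YDContains μ f τ} := by
      intro τ; ext f; simp only [Set.mem_setOf_eq]; tauto
    rw [e1, e1]
    refine key μ (fun f => IsSparseFilling μ f ∧ {p | f p ≠ 0} = S) ?_ ?_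
    · rintro f ⟨hsp, hsupp⟩
      exact ⟨hgsparse μ f hsp, by rw [hgsupp μ f]; exact hsupp⟩
    · rintro f ⟨hsp, _⟩
      exact hsp.2.2.1
  · intro μ
    refine key μ (IsSignedTransversal μ) ?_ ?_
    · rintro f ⟨hsp, hrows, hcols⟩
      refine ⟨hgsparse μ f hsp, fun i hi => ?_, fun j hj => ?_⟩
      · obtain ⟨j, hj⟩ := hrows i hi
        exact ⟨j, SW8.gmap_ne_zero.2 hj⟩
      · obtain ⟨i, hi'⟩ := hcols j hj
        exact ⟨i, SW8.gmap_ne_zero.2 hi'⟩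
    · intro f hf
      exact hf.1.2.2.1
end

section
/- Let χ₁ and χ₂ be signed permutation matrices, at least one of which is symmetric, and set θ = [[χ₁,0],[0,χ₂]] and ω = [[χ₁,0],[0,−χ₂]] (block diagonal matrices). Then for every self-conjugate Young diagram λ (one invariant under reflection in the main diagonal), the number of symmetric θ-avoiding sparse fillings of λ equals the number of symmetric ω-avoiding sparse fillings of λ, where a sparse filling is symmetric if the value at cell (i,j) equals the value at cell (j,i) for all cells of λ. -/
open Matrix

section Stmt9Aux

variable {a : ℕ} (μ : YoungDiagram) (χ₁ : Matrix (Fin a) (Fin a) ℤ)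

/-- An occurrence of pattern `τ` strictly north-west of position `(i,j)`. -/
def OccNW (f : ℕ × ℕ → ℤ) {k : ℕ} (τ : Matrix (Fin k) (Fin k) ℤ) (i j : ℕ) : Prop :=
  ∃ r c : Fin k → ℕ, StrictMono r ∧ StrictMono c ∧ (∀ x, r x < i) ∧ (∀ y, c y < j) ∧
    (∀ x y, (r x, c y) ∈ μ.cells) ∧ (∀ x y, f (r x, c y) = τ x y)

/-- `(i,j)` has an occurrence of `χ₁` or of `χ₁ᵀ` strictly north-west of it. -/
def BRegion (f : ℕ × ℕ → ℤ) (i j : ℕ) : Prop :=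
  OccNW μ f χ₁ i j ∨ OccNW μ f χ₁.transpose i j

open Classical in
/-- Negate the filling on the region `BRegion`. -/
noncomputable def PhiMap (f : ℕ × ℕ → ℤ) : ℕ × ℕ → ℤ := fun p =>
  if BRegion μ χ₁ f p.1 p.2 then -f p else f p

variable {μ χ₁}

lemma phiMap_pos {f : ℕ × ℕ → ℤ} {p : ℕ × ℕ} (h : BRegion μ χ₁ f p.1 p.2) :
    PhiMap μ χ₁ f p = -f p := by
  simp only [PhiMap]; rw [if_pos h]

lemma phiMap_neg {f : ℕ × ℕ → ℤ} {p : ℕ × ℕ} (h : ¬ BRegion μ χ₁ f p.1 p.2) :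
    PhiMap μ χ₁ f p = f p := by
  simp only [PhiMap]; rw [if_neg h]

lemma phiMap_eq_or (f : ℕ × ℕ → ℤ) (p : ℕ × ℕ) :
    PhiMap μ χ₁ f p = f p ∨ PhiMap μ χ₁ f p = -f p := by
  by_cases h : BRegion μ χ₁ f p.1 p.2
  · exact Or.inr (phiMap_pos h)
  · exact Or.inl (phiMap_neg h)

lemma phiMap_zero_iff (f : ℕ × ℕ → ℤ) (p : ℕ × ℕ) :
    PhiMap μ χ₁ f p = 0 ↔ f p = 0 := by
  rcases phiMap_eq_or (μ := μ) (χ₁ := χ₁) f p with h | h <;> rw [h] <;> simp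

/-- Key transfer lemma: if `g` agrees with `f` outside `BRegion` (w.r.t. `f`) and
vanishes wherever `f` does, then `BRegion f ⊆ BRegion g`. -/
lemma bregion_gen_aux (f g : ℕ × ℕ → ℤ)
    (K : ∀ p : ℕ × ℕ, ¬ BRegion μ χ₁ f p.1 p.2 → g p = f p)
    (K0 : ∀ p : ℕ × ℕ, f p = 0 → g p = 0) :
    ∀ m : ℕ, ∀ τ₀ : Matrix (Fin a) (Fin a) ℤ, (τ₀ = χ₁ ∨ τ₀ = χ₁.transpose) →
      ∀ (i j : ℕ) (r c : Fin a → ℕ), StrictMono r → StrictMono c →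
      (∀ x, r x < i) → (∀ y, c y < j) → (∀ x y, (r x, c y) ∈ μ.cells) →
      (∀ x y, f (r x, c y) = τ₀ x y) →
      Finset.univ.sup r + Finset.univ.sup c ≤ m → BRegion μ χ₁ g i j := by
  intro m
  induction m using Nat.strong_induction_on with
  | _ m IH =>
    intro τ₀ hτ i j r c hr hc hri hcj hcell hval hm
    by_cases hB : ∃ x y, τ₀ x y ≠ 0 ∧ BRegion μ χ₁ f (r x) (c y)
    · obtain ⟨x, y, -, hBxy⟩ := hB
      have hget : ∃ τ₁ : Matrix (Fin a) (Fin a) ℤ, (τ₁ = χ₁ ∨ τ₁ = χ₁.transpose) ∧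
          OccNW μ f τ₁ (r x) (c y) := by
        rcases hBxy with h | h
        exacts [⟨χ₁, Or.inl rfl, h⟩, ⟨χ₁.transpose, Or.inr rfl, h⟩]
      obtain ⟨τ₁, hτ₁, hOcc⟩ := hget
      obtain ⟨r', c', hr', hc', hri', hcj', hcell', hval'⟩ := hOcc
      have hrx : 0 < r x := lt_of_le_of_lt (Nat.zero_le _) (hri' ⟨0, x.pos⟩)
      have hcy : 0 < c y := lt_of_le_of_lt (Nat.zero_le _) (hcj' ⟨0, x.pos⟩)
      have hlt : Finset.univ.sup r' + Finset.univ.sup c' < m := by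
        have h1 : Finset.univ.sup r' < r x :=
          (Finset.sup_lt_iff hrx).mpr fun z _ => hri' z
        have h2 : Finset.univ.sup c' < c y :=
          (Finset.sup_lt_iff hcy).mpr fun z _ => hcj' z
        have h3 : r x ≤ Finset.univ.sup r := Finset.le_sup (Finset.mem_univ x)
        have h4 : c y ≤ Finset.univ.sup c := Finset.le_sup (Finset.mem_univ y)
        omega
      exact IH _ hlt τ₁ hτ₁ i j r' c' hr' hc'
        (fun z => (hri' z).trans (hri x)) (fun z => (hcj' z).trans (hcj y))
        hcell' hval' le_rfl
    · push_neg at hB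
      have hg : ∀ x y, g (r x, c y) = τ₀ x y := by
        intro x y
        by_cases h0 : τ₀ x y = 0
        · rw [h0]; exact K0 _ (by rw [hval x y, h0])
        · rw [K (r x, c y) (hB x y h0), hval]
      rcases hτ with h | h
      · exact Or.inl ⟨r, c, hr, hc, hri, hcj, hcell, by rw [← h]; exact hg⟩
      · exact Or.inr ⟨r, c, hr, hc, hri, hcj, hcell, by rw [← h]; exact hg⟩

lemma bregion_gen (f g : ℕ × ℕ → ℤ)
    (K : ∀ p : ℕ × ℕ, ¬ BRegion μ χ₁ f p.1 p.2 → g p = f p)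
    (K0 : ∀ p : ℕ × ℕ, f p = 0 → g p = 0) :
    ∀ i j, BRegion μ χ₁ f i j → BRegion μ χ₁ g i j := by
  intro i j hB
  have hget : ∃ τ₀ : Matrix (Fin a) (Fin a) ℤ, (τ₀ = χ₁ ∨ τ₀ = χ₁.transpose) ∧
      OccNW μ f τ₀ i j := by
    rcases hB with h | h
    exacts [⟨χ₁, Or.inl rfl, h⟩, ⟨χ₁.transpose, Or.inr rfl, h⟩]
  obtain ⟨τ₀, hτ, hOcc⟩ := hget
  obtain ⟨r, c, hr, hc, hri, hcj, hcell, hval⟩ := hOcc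
  exact bregion_gen_aux f g K K0 _ τ₀ hτ i j r c hr hc hri hcj hcell hval le_rfl

lemma bregion_phi (f : ℕ × ℕ → ℤ) (i j : ℕ) :
    BRegion μ χ₁ (PhiMap μ χ₁ f) i j ↔ BRegion μ χ₁ f i j := by
  have d1 : ∀ i j, BRegion μ χ₁ f i j → BRegion μ χ₁ (PhiMap μ χ₁ f) i j :=
    bregion_gen f _ (fun p hp => phiMap_neg hp)
      (fun p hp => by rcases phiMap_eq_or (μ := μ) (χ₁ := χ₁) f p with h | h <;>
        rw [h, hp] <;> simp)
  refine ⟨?_, d1 i j⟩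
  refine bregion_gen (PhiMap μ χ₁ f) f ?_ ?_ i j
  · intro p hp
    exact (phiMap_neg (fun hq => hp (d1 _ _ hq))).symm
  · intro p hp
    exact (phiMap_zero_iff f p).mp hp

lemma phiMap_invol (f : ℕ × ℕ → ℤ) : PhiMap μ χ₁ (PhiMap μ χ₁ f) = f := by
  funext p
  by_cases h : BRegion μ χ₁ f p.1 p.2
  · rw [phiMap_pos ((bregion_phi f p.1 p.2).mpr h), phiMap_pos h, neg_neg]
  · rw [phiMap_neg (fun hq => h ((bregion_phi f p.1 p.2).mp hq)), phiMap_neg h]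

lemma phiMap_injective : Function.Injective (PhiMap μ χ₁) := by
  intro f g h
  rw [← phiMap_invol (μ := μ) (χ₁ := χ₁) f, h, phiMap_invol]

lemma occNW_transpose {f : ℕ × ℕ → ℤ} (hf : ∀ i j, f (i, j) = f (j, i))
    (hμ : ∀ i j : ℕ, (i, j) ∈ μ.cells ↔ (j, i) ∈ μ.cells)
    {k : ℕ} {τ : Matrix (Fin k) (Fin k) ℤ} {i j : ℕ} (h : OccNW μ f τ i j) :
    OccNW μ f τ.transpose j i := by
  obtain ⟨r, c, hr, hc, hri, hcj, hcell, hval⟩ := h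
  exact ⟨c, r, hc, hr, hcj, hri, fun x y => (hμ _ _).mp (hcell y x),
    fun x y => by rw [hf, Matrix.transpose_apply]; exact hval y x⟩

lemma bregion_symm {f : ℕ × ℕ → ℤ} (hf : ∀ i j, f (i, j) = f (j, i))
    (hμ : ∀ i j : ℕ, (i, j) ∈ μ.cells ↔ (j, i) ∈ μ.cells) (i j : ℕ) :
    BRegion μ χ₁ f i j ↔ BRegion μ χ₁ f j i := by
  have key : ∀ i j, BRegion μ χ₁ f i j → BRegion μ χ₁ f j i := by
    rintro i j (h | h)
    · exact Or.inr (occNW_transpose hf hμ h)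
    · exact Or.inl (by simpa using occNW_transpose hf hμ h)
  exact ⟨key i j, key j i⟩

lemma phiMap_symm {f : ℕ × ℕ → ℤ} (hf : ∀ i j, f (i, j) = f (j, i))
    (hμ : ∀ i j : ℕ, (i, j) ∈ μ.cells ↔ (j, i) ∈ μ.cells) (i j : ℕ) :
    PhiMap μ χ₁ f (i, j) = PhiMap μ χ₁ f (j, i) := by
  by_cases h : BRegion μ χ₁ f i j
  · rw [phiMap_pos (p := (i, j)) h,
      phiMap_pos (p := (j, i)) ((bregion_symm hf hμ i j).mp h), hf i j]
  · rw [phiMap_neg (p := (i, j)) h,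
      phiMap_neg (p := (j, i)) (fun hq => h ((bregion_symm hf hμ j i).mp hq)), hf i j]

lemma phiMap_sparse {f : ℕ × ℕ → ℤ} (hsp : IsSparseFilling μ f) :
    IsSparseFilling μ (PhiMap μ χ₁ f) := by
  obtain ⟨hsupp, hvals, hrow, hcol⟩ := hsp
  refine ⟨fun p hp => hsupp p (fun h0 => hp ((phiMap_zero_iff f p).mpr h0)),
    fun p => ?_, fun i => ?_, fun j => ?_⟩
  · rcases phiMap_eq_or (μ := μ) (χ₁ := χ₁) f p with h | h <;>
      rcases hvals p with h' | h' | h' <;> rw [h, h'] <;> norm_num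
  · have he : {j : ℕ | PhiMap μ χ₁ f (i, j) ≠ 0} = {j : ℕ | f (i, j) ≠ 0} := by
      ext j; exact not_congr (phiMap_zero_iff f (i, j))
    rw [he]; exact hrow i
  · have he : {i : ℕ | PhiMap μ χ₁ f (i, j) ≠ 0} = {i : ℕ | f (i, j) ≠ 0} := by
      ext i; exact not_congr (phiMap_zero_iff f (i, j))
    rw [he]; exact hcol j

end Stmt9Aux

/-- Glue two increasing sequences into one on `Fin (m+n)`. -/
def glueF {m n : ℕ} (r : Fin m → ℕ) (R : Fin n → ℕ) : Fin (m + n) → ℕ := fun i =>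
  if h : (i : ℕ) < m then r ⟨i, h⟩ else R ⟨(i : ℕ) - m, by omega⟩

lemma glueF_castAdd {m n : ℕ} (r : Fin m → ℕ) (R : Fin n → ℕ) (i : Fin m) :
    glueF r R (Fin.castAdd n i) = r i := by
  simp [glueF, i.isLt]

lemma glueF_natAdd {m n : ℕ} (r : Fin m → ℕ) (R : Fin n → ℕ) (i : Fin n) :
    glueF r R (Fin.natAdd m i) = R i := by
  have h : ¬ ((Fin.natAdd m i : ℕ) < m) := by simp
  rw [glueF, dif_neg h]
  congr 1
  apply Fin.ext
  simp

lemma strictMono_glueF {m n : ℕ} {r : Fin m → ℕ} {R : Fin n → ℕ}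
    (hr : StrictMono r) (hR : StrictMono R) (h : ∀ x y, r x < R y) :
    StrictMono (glueF r R) := by
  intro i j hij
  have hij' : (i : ℕ) < (j : ℕ) := hij
  unfold glueF
  split_ifs with h1 h2 h2
  · exact hr (by exact hij')
  · exact h _ _
  · exact absurd hij' (by omega)
  · exact hR (by simp only [Fin.mk_lt_mk]; omega)

lemma bd2_apply_ll {m n : ℕ} (A : Matrix (Fin m) (Fin m) ℤ) (B : Matrix (Fin n) (Fin n) ℤ)
    (i j : Fin m) : blockDiag2 A B (Fin.castAdd n i) (Fin.castAdd n j) = A i j := by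
  simp [blockDiag2]

lemma bd2_apply_rr {m n : ℕ} (A : Matrix (Fin m) (Fin m) ℤ) (B : Matrix (Fin n) (Fin n) ℤ)
    (i j : Fin n) : blockDiag2 A B (Fin.natAdd m i) (Fin.natAdd m j) = B i j := by
  simp [blockDiag2]

lemma bd2_apply_lr {m n : ℕ} (A : Matrix (Fin m) (Fin m) ℤ) (B : Matrix (Fin n) (Fin n) ℤ)
    (i : Fin m) (j : Fin n) : blockDiag2 A B (Fin.castAdd n i) (Fin.natAdd m j) = 0 := by
  simp [blockDiag2]

lemma bd2_apply_rl {m n : ℕ} (A : Matrix (Fin m) (Fin m) ℤ) (B : Matrix (Fin n) (Fin n) ℤ)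
    (i : Fin n) (j : Fin m) : blockDiag2 A B (Fin.natAdd m i) (Fin.castAdd n j) = 0 := by
  simp [blockDiag2]

section Build

variable {a : ℕ} {μ : YoungDiagram} {χ₁ : Matrix (Fin a) (Fin a) ℤ}

/-- Combine a `χ₁`-occurrence strictly NW of a `ψ`-occurrence into an occurrence of
`blockDiag2 χ₁ ψ`, using sparsity for the zero off-blocks. -/
lemma build {b : ℕ} (h1 : IsSignedPermMatrix χ₁) {ψ : Matrix (Fin b) (Fin b) ℤ}
    {f : ℕ × ℕ → ℤ} (hsp : IsSparseFilling μ f) {r c : Fin a → ℕ} {R C : Fin b → ℕ}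
    (hr : StrictMono r) (hc : StrictMono c) (hR : StrictMono R) (hC : StrictMono C)
    (hcell₁ : ∀ x y, (r x, c y) ∈ μ.cells) (hval₁ : ∀ x y, f (r x, c y) = χ₁ x y)
    (hcell₂ : ∀ x y, (R x, C y) ∈ μ.cells) (hval₂ : ∀ x y, f (R x, C y) = ψ x y)
    (hrR : ∀ x y, r x < R y) (hcC : ∀ x y, c x < C y) :
    YDContains μ f (blockDiag2 χ₁ ψ) := by
  have hlr : ∀ (x : Fin a) (y : Fin b), f (r x, C y) = 0 := by
    intro x y
    obtain ⟨jx, hjx, -⟩ := h1.2.1 x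
    have hne : f (r x, c jx) ≠ 0 := by rw [hval₁]; exact hjx
    by_contra h0
    have heq : c jx = C y := hsp.2.2.1 (r x) hne h0
    exact absurd heq (Nat.ne_of_lt (hcC jx y))
  have hrl : ∀ (x : Fin b) (y : Fin a), f (R x, c y) = 0 := by
    intro x y
    obtain ⟨iy, hiy, -⟩ := h1.2.2 y
    have hne : f (r iy, c y) ≠ 0 := by rw [hval₁]; exact hiy
    by_contra h0
    have heq : r iy = R x := hsp.2.2.2 (c y) hne h0
    exact absurd heq (Nat.ne_of_lt (hrR iy x))
  refine ⟨glueF r R, glueF c C, strictMono_glueF hr hR hrR, strictMono_glueF hc hC hcC,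
    ?_, ?_⟩
  · intro i j
    induction i using Fin.addCases with
    | left i =>
      induction j using Fin.addCases with
      | left j => rw [glueF_castAdd, glueF_castAdd]; exact hcell₁ i j
      | right j =>
        rw [glueF_castAdd, glueF_natAdd]
        exact (YoungDiagram.mem_cells _).mpr (μ.up_left_mem (hrR i j).le le_rfl
          ((YoungDiagram.mem_cells _).mp (hcell₂ j j)))
    | right i =>
      induction j using Fin.addCases with
      | left j =>
        rw [glueF_natAdd, glueF_castAdd]
        exact (YoungDiagram.mem_cells _).mpr (μ.up_left_mem le_rfl (hcC j i).le
          ((YoungDiagram.mem_cells _).mp (hcell₂ i i)))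
      | right j => rw [glueF_natAdd, glueF_natAdd]; exact hcell₂ i j
  · intro i j
    induction i using Fin.addCases with
    | left i =>
      induction j using Fin.addCases with
      | left j => rw [glueF_castAdd, glueF_castAdd, bd2_apply_ll]; exact hval₁ i j
      | right j => rw [glueF_castAdd, glueF_natAdd, bd2_apply_lr]; exact hlr i j
    | right i =>
      induction j using Fin.addCases with
      | left j => rw [glueF_natAdd, glueF_castAdd, bd2_apply_rl]; exact hrl i j
      | right j => rw [glueF_natAdd, glueF_natAdd, bd2_apply_rr]; exact hval₂ i j

/-- A `ψ`-occurrence all of whose cells lie in `BRegion`. -/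
def CComb {b : ℕ} (μ : YoungDiagram) (χ₁ : Matrix (Fin a) (Fin a) ℤ)
    (ψ : Matrix (Fin b) (Fin b) ℤ) (f : ℕ × ℕ → ℤ) : Prop :=
  ∃ R C : Fin b → ℕ, StrictMono R ∧ StrictMono C ∧ (∀ x y, (R x, C y) ∈ μ.cells) ∧
    (∀ x y, f (R x, C y) = ψ x y) ∧ (∀ x y, BRegion μ χ₁ f (R x) (C y))

lemma ccomb_phi {b : ℕ} {ψ : Matrix (Fin b) (Fin b) ℤ} {f : ℕ × ℕ → ℤ}
    (h : CComb μ χ₁ ψ f) : CComb μ χ₁ (-ψ) (PhiMap μ χ₁ f) := by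
  obtain ⟨R, C, hR, hC, hcell, hval, hB⟩ := h
  refine ⟨R, C, hR, hC, hcell, fun x y => ?_, fun x y => (bregion_phi f _ _).mpr (hB x y)⟩
  rw [phiMap_pos (p := (R x, C y)) (hB x y), hval x y, Matrix.neg_apply]

lemma L_forward {b : ℕ} {ψ : Matrix (Fin b) (Fin b) ℤ} {f : ℕ × ℕ → ℤ}
    (h : YDContains μ f (blockDiag2 χ₁ ψ)) : CComb μ χ₁ ψ f := by
  obtain ⟨r, c, hr, hc, hcell, hval⟩ := h
  have hca : ∀ x y : Fin a, x < y → (Fin.castAdd b x : Fin (a + b)) < Fin.castAdd b y := by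
    intro x y hxy
    rw [Fin.lt_def] at hxy ⊢
    simpa using hxy
  have hna : ∀ x y : Fin b, x < y → (Fin.natAdd a x : Fin (a + b)) < Fin.natAdd a y := by
    intro x y hxy
    rw [Fin.lt_def] at hxy ⊢
    simpa using hxy
  have hcr : StrictMono (fun z : Fin a => r (Fin.castAdd b z)) :=
    fun x y hxy => hr (hca x y hxy)
  have hcc : StrictMono (fun z : Fin a => c (Fin.castAdd b z)) :=
    fun x y hxy => hc (hca x y hxy)
  have hlt : ∀ (z : Fin a) (x : Fin b), (Fin.castAdd b z : Fin (a + b)) < Fin.natAdd a x := by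
    intro z x
    rw [Fin.lt_def]
    simp only [Fin.coe_castAdd, Fin.coe_natAdd]
    omega
  refine ⟨fun x => r (Fin.natAdd a x), fun y => c (Fin.natAdd a y),
    fun x y hxy => hr (hna x y hxy),
    fun x y hxy => hc (hna x y hxy),
    fun x y => hcell _ _,
    fun x y => by rw [hval, bd2_apply_rr],
    fun x y => Or.inl ⟨fun z => r (Fin.castAdd b z), fun z => c (Fin.castAdd b z),
      hcr, hcc, fun z => hr (hlt z x), fun z => hc (hlt z y),
      fun z w => hcell _ _, fun z w => by rw [hval, bd2_apply_ll]⟩⟩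

lemma L_backward {b : ℕ} (hb : 0 < b) {ψ : Matrix (Fin b) (Fin b) ℤ}
    (hψ : χ₁.IsSymm ∨ ψ.IsSymm) (h1 : IsSignedPermMatrix χ₁) {f : ℕ × ℕ → ℤ}
    (hsp : IsSparseFilling μ f) (hf : ∀ i j, f (i, j) = f (j, i))
    (hμ : ∀ i j : ℕ, (i, j) ∈ μ.cells ↔ (j, i) ∈ μ.cells)
    (h : CComb μ χ₁ ψ f) : YDContains μ f (blockDiag2 χ₁ ψ) := by
  obtain ⟨R, C, hR, hC, hcell₂, hval₂, hB⟩ := h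
  have z0 : Fin b := ⟨0, hb⟩
  have hRle : ∀ y, R ⟨0, hb⟩ ≤ R y := fun y => hR.monotone (by simp [Fin.le_def])
  have hCle : ∀ y, C ⟨0, hb⟩ ≤ C y := fun y => hC.monotone (by simp [Fin.le_def])
  have hocc := hB ⟨0, hb⟩ ⟨0, hb⟩
  have main : ∀ (r c : Fin a → ℕ), StrictMono r → StrictMono c →
      (∀ x, r x < R ⟨0, hb⟩) → (∀ y, c y < C ⟨0, hb⟩) →
      (∀ x y, (r x, c y) ∈ μ.cells) → (∀ x y, f (r x, c y) = χ₁ x y) →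
      YDContains μ f (blockDiag2 χ₁ ψ) := by
    intro r c hr hc hri hcj hcell₁ hval₁
    exact build h1 hsp hr hc hR hC hcell₁ hval₁ hcell₂ hval₂
      (fun x y => (hri x).trans_le (hRle y)) (fun x y => (hcj x).trans_le (hCle y))
  rcases hocc with hocc | hocc
  · obtain ⟨r, c, hr, hc, hri, hcj, hcell₁, hval₁⟩ := hocc
    exact main r c hr hc hri hcj hcell₁ hval₁
  · rcases hψ with hs | hs
    · have hs' : χ₁.transpose = χ₁ := hs
      rw [hs'] at hocc
      obtain ⟨r, c, hr, hc, hri, hcj, hcell₁, hval₁⟩ := hocc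
      exact main r c hr hc hri hcj hcell₁ hval₁
    · -- ψ symmetric: transpose the whole configuration
      have hs' : ψ.transpose = ψ := hs
      obtain ⟨r, c, hr, hc, hri, hcj, hcell₁, hval₁⟩ := hocc
      have hval₁' : ∀ x y, f (c x, r y) = χ₁ x y := fun x y => by
        rw [hf, hval₁, Matrix.transpose_apply]
      have hcell₁' : ∀ x y, ((c x, r y) : ℕ × ℕ) ∈ μ.cells :=
        fun x y => (hμ _ _).mp (hcell₁ y x)
      have happ : ∀ u v : Fin b, ψ v u = ψ u v := by
        intro u v
        conv_lhs => rw [← hs']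
        exact Matrix.transpose_apply ψ v u
      have hval₂' : ∀ x y, f (C x, R y) = ψ x y := fun x y => by
        rw [hf, hval₂, happ]
      have hcell₂' : ∀ x y, ((C x, R y) : ℕ × ℕ) ∈ μ.cells :=
        fun x y => (hμ _ _).mp (hcell₂ y x)
      exact build h1 hsp hc hr hC hR hcell₁' hval₁' hcell₂' hval₂'
        (fun x y => (hcj x).trans_le (hCle y)) (fun x y => (hri x).trans_le (hRle y))

lemma transfer {b : ℕ} (hb : 0 < b) {ψ : Matrix (Fin b) (Fin b) ℤ}
    (hψ : χ₁.IsSymm ∨ ψ.IsSymm) (h1 : IsSignedPermMatrix χ₁) {f : ℕ × ℕ → ℤ}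
    (hsp : IsSparseFilling μ f) (hf : ∀ i j, f (i, j) = f (j, i))
    (hμ : ∀ i j : ℕ, (i, j) ∈ μ.cells ↔ (j, i) ∈ μ.cells)
    (hav : ¬ YDContains μ f (blockDiag2 χ₁ ψ)) :
    ¬ YDContains μ (PhiMap μ χ₁ f) (blockDiag2 χ₁ (-ψ)) := by
  intro hcon
  apply hav
  have h2 : CComb μ χ₁ (-ψ) (PhiMap μ χ₁ f) := L_forward hcon
  have h3 : CComb μ χ₁ ψ f := by
    have h4 := ccomb_phi h2
    rw [phiMap_invol, neg_neg] at h4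
    exact h4
  exact L_backward hb hψ h1 hsp hf hμ h3

end Build



/-- for signed permutation matrices χ₁, χ₂ with at least one of them
symmetric, set θ = [[χ₁,0],[0,χ₂]] and ω = [[χ₁,0],[0,−χ₂]]. For every self-conjugate
Young diagram λ, the symmetric θ-avoiding sparse fillings of λ are equinumerous with the
symmetric ω-avoiding sparse fillings of λ. -/
theorem stmt9 {a b : ℕ} (χ₁ : Matrix (Fin a) (Fin a) ℤ) (χ₂ : Matrix (Fin b) (Fin b) ℤ)
    (h1 : IsSignedPermMatrix χ₁) (h2 : IsSignedPermMatrix χ₂)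
    (hsym : χ₁.IsSymm ∨ χ₂.IsSymm) :
    ∀ μ : YoungDiagram, (∀ i j : ℕ, (i, j) ∈ μ.cells ↔ (j, i) ∈ μ.cells) →
      {f : ℕ × ℕ → ℤ | IsSparseFilling μ f ∧ (∀ i j : ℕ, f (i, j) = f (j, i)) ∧
        ¬ YDContains μ f (blockDiag2 χ₁ χ₂)}.ncard =
      {f : ℕ × ℕ → ℤ | IsSparseFilling μ f ∧ (∀ i j : ℕ, f (i, j) = f (j, i)) ∧
        ¬ YDContains μ f (blockDiag2 χ₁ (-χ₂))}.ncard := by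
  intro μ hμ
  rcases Nat.eq_zero_or_pos b with hb | hb
  · subst hb
    have h0 : -χ₂ = χ₂ := by
      ext i j
      exact i.elim0
    rw [h0]
  · have hinj : Function.Injective (PhiMap μ χ₁) := phiMap_injective
    have hmem : ∀ ψ : Matrix (Fin b) (Fin b) ℤ, (χ₁.IsSymm ∨ ψ.IsSymm) →
        ∀ f : ℕ × ℕ → ℤ, (IsSparseFilling μ f ∧ (∀ i j : ℕ, f (i, j) = f (j, i)) ∧
          ¬ YDContains μ f (blockDiag2 χ₁ ψ)) →
        (IsSparseFilling μ (PhiMap μ χ₁ f) ∧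
          (∀ i j : ℕ, PhiMap μ χ₁ f (i, j) = PhiMap μ χ₁ f (j, i)) ∧
          ¬ YDContains μ (PhiMap μ χ₁ f) (blockDiag2 χ₁ (-ψ))) := by
      rintro ψ hψ f ⟨hsp, hfs, hav⟩
      exact ⟨phiMap_sparse hsp, fun i j => phiMap_symm hfs hμ i j,
        transfer hb hψ h1 hsp hfs hμ hav⟩
    have hnegsym : χ₁.IsSymm ∨ (-χ₂).IsSymm := by
      rcases hsym with h | h
      · exact Or.inl h
      · right
        have h' : χ₂ᵀ = χ₂ := h
        show (-χ₂)ᵀ = -χ₂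
        rw [Matrix.transpose_neg, h']
    have himg : PhiMap μ χ₁ '' {f | IsSparseFilling μ f ∧ (∀ i j : ℕ, f (i, j) = f (j, i)) ∧
        ¬ YDContains μ f (blockDiag2 χ₁ χ₂)} =
        {f | IsSparseFilling μ f ∧ (∀ i j : ℕ, f (i, j) = f (j, i)) ∧
        ¬ YDContains μ f (blockDiag2 χ₁ (-χ₂))} := by
      apply Set.Subset.antisymm
      · rintro g ⟨f, hf, rfl⟩
        exact hmem χ₂ hsym f hf
      · rintro g hg
        refine ⟨PhiMap μ χ₁ g, ?_, phiMap_invol g⟩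
        have hg2 := hmem (-χ₂) hnegsym g hg
        rwa [neg_neg] at hg2
    rw [← himg, Set.ncard_image_of_injective _ hinj]
end

section
/- For any signed permutation matrices χ₁, χ₂, χ₃, the block diagonal patterns diag(χ₁,χ₂,χ₃) and diag(χ₁,−χ₂,χ₃) are Wilf equivalent: for every n ≥ 1, the number of signed permutations in B_n avoiding diag(χ₁,χ₂,χ₃) equals the number of signed permutations in B_n avoiding diag(χ₁,−χ₂,χ₃). -/
open Matrix

namespace S10

variable {n : ℕ}

/-- An occurrence of the pattern `χ` in `N` at rows `r` and columns `c`. -/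
def Occ {k : ℕ} (N : Matrix (Fin n) (Fin n) ℤ) (χ : Matrix (Fin k) (Fin k) ℤ)
    (r c : Fin k → Fin n) : Prop :=
  StrictMono r ∧ StrictMono c ∧ ∀ x y, N (r x) (c y) = χ x y

section Blocks

variable {a b c : ℕ} (A : Matrix (Fin a) (Fin a) ℤ) (B : Matrix (Fin b) (Fin b) ℤ)
  (C : Matrix (Fin c) (Fin c) ℤ)

lemma bd2_ll (x y : Fin a) : blockDiag2 A B (Fin.castAdd b x) (Fin.castAdd b y) = A x y := by
  simp [blockDiag2, Matrix.reindex_apply, ← finSumFinEquiv_apply_left]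

lemma bd2_lr (x : Fin a) (y : Fin b) :
    blockDiag2 A B (Fin.castAdd b x) (Fin.natAdd a y) = 0 := by
  simp [blockDiag2, Matrix.reindex_apply, ← finSumFinEquiv_apply_left, ← finSumFinEquiv_apply_right]

lemma bd2_rl (x : Fin b) (y : Fin a) :
    blockDiag2 A B (Fin.natAdd a x) (Fin.castAdd b y) = 0 := by
  simp [blockDiag2, Matrix.reindex_apply, ← finSumFinEquiv_apply_left, ← finSumFinEquiv_apply_right]

lemma bd2_rr (x y : Fin b) : blockDiag2 A B (Fin.natAdd a x) (Fin.natAdd a y) = B x y := by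
  simp [blockDiag2, Matrix.reindex_apply, ← finSumFinEquiv_apply_right]

/-- the three embeddings into `Fin (a + b + c)` -/
def e1 (x : Fin a) : Fin (a + b + c) := Fin.castAdd c (Fin.castAdd b x)
def e2 (x : Fin b) : Fin (a + b + c) := Fin.castAdd c (Fin.natAdd a x)
def e3 (x : Fin c) : Fin (a + b + c) := Fin.natAdd (a + b) x

lemma e1_val (x : Fin a) : ((e1 (b := b) (c := c) x : Fin (a+b+c)) : ℕ) = x := rfl
lemma e2_val (x : Fin b) : ((e2 (a := a) (c := c) x : Fin (a+b+c)) : ℕ) = a + x := rfl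
lemma e3_val (x : Fin c) : ((e3 (a := a) (b := b) x : Fin (a+b+c)) : ℕ) = a + b + x := rfl

lemma e1_strictMono : StrictMono (e1 (a := a) (b := b) (c := c)) := fun x y h => by
  simp only [e1, Fin.lt_def, Fin.coe_castAdd]
  exact h
lemma e2_strictMono : StrictMono (e2 (a := a) (b := b) (c := c)) := fun x y h => by
  simp only [e2, Fin.lt_def, Fin.coe_castAdd, Fin.coe_natAdd]
  omega
lemma e3_strictMono : StrictMono (e3 (a := a) (b := b) (c := c)) := fun x y h => by
  simp only [e3, Fin.lt_def, Fin.coe_natAdd]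
  omega

lemma bd3_11 (x y : Fin a) : blockDiag3 A B C (e1 x) (e1 y) = A x y := by
  simp [blockDiag3, e1, bd2_ll]
lemma bd3_22 (x y : Fin b) : blockDiag3 A B C (e2 x) (e2 y) = B x y := by
  simp [blockDiag3, e2, bd2_ll, bd2_rr]
lemma bd3_33 (x y : Fin c) : blockDiag3 A B C (e3 x) (e3 y) = C x y := by
  simp [blockDiag3, e3, bd2_rr]
lemma bd3_12 (x : Fin a) (y : Fin b) : blockDiag3 A B C (e1 x) (e2 y) = 0 := by
  simp [blockDiag3, e1, e2, bd2_ll, bd2_lr]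
lemma bd3_21 (x : Fin b) (y : Fin a) : blockDiag3 A B C (e2 x) (e1 y) = 0 := by
  simp [blockDiag3, e1, e2, bd2_ll, bd2_rl]
lemma bd3_13 (x : Fin a) (y : Fin c) : blockDiag3 A B C (e1 x) (e3 y) = 0 := by
  simp [blockDiag3, e1, e3, bd2_lr]
lemma bd3_31 (x : Fin c) (y : Fin a) : blockDiag3 A B C (e3 x) (e1 y) = 0 := by
  simp [blockDiag3, e1, e3, bd2_rl]
lemma bd3_23 (x : Fin b) (y : Fin c) : blockDiag3 A B C (e2 x) (e3 y) = 0 := by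
  simp [blockDiag3, e2, e3, bd2_lr]
lemma bd3_32 (x : Fin c) (y : Fin b) : blockDiag3 A B C (e3 x) (e2 y) = 0 := by
  simp [blockDiag3, e2, e3, bd2_rl]

end Blocks

section Glue

def glue2 {m k : ℕ} {X : Sort*} (f : Fin m → X) (g : Fin k → X) : Fin (m + k) → X :=
  Fin.addCases f g

@[simp] lemma glue2_left {m k : ℕ} {X : Sort*} (f : Fin m → X) (g : Fin k → X) (x : Fin m) :
    glue2 f g (Fin.castAdd k x) = f x := by simp [glue2]
@[simp] lemma glue2_right {m k : ℕ} {X : Sort*} (f : Fin m → X) (g : Fin k → X) (x : Fin k) :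
    glue2 f g (Fin.natAdd m x) = g x := by simp [glue2]

lemma fin_cases_add {m k : ℕ} (p : Fin (m + k)) :
    (∃ x : Fin m, p = Fin.castAdd k x) ∨ (∃ x : Fin k, p = Fin.natAdd m x) := by
  rcases lt_or_ge (p : ℕ) m with h | h
  · exact Or.inl ⟨⟨p, h⟩, by ext; simp⟩
  · exact Or.inr ⟨⟨p - m, by omega⟩, by ext; simp; omega⟩

lemma glue2_strictMono {n m k : ℕ} {f : Fin m → Fin n} {g : Fin k → Fin n}
    (hf : StrictMono f) (hg : StrictMono g) (hfg : ∀ x y, f x < g y) :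
    StrictMono (glue2 f g) := by
  intro p q hpq
  rcases fin_cases_add p with ⟨x, rfl⟩ | ⟨x, rfl⟩ <;>
    rcases fin_cases_add q with ⟨y, rfl⟩ | ⟨y, rfl⟩ <;>
      simp only [glue2_left, glue2_right]
  · simp only [Fin.lt_def, Fin.coe_castAdd] at hpq
    exact hf hpq
  · exact hfg x y
  · simp only [Fin.lt_def, Fin.coe_castAdd, Fin.coe_natAdd] at hpq
    omega
  · simp only [Fin.lt_def, Fin.coe_natAdd] at hpq
    exact hg (by omega)

variable {a b c : ℕ} {X : Sort*}

def glue3 (f : Fin a → X) (g : Fin b → X) (h : Fin c → X) : Fin (a + b + c) → X :=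
  glue2 (glue2 f g) h

lemma glue3_e1 (f : Fin a → X) (g : Fin b → X) (h : Fin c → X) (x : Fin a) :
    glue3 f g h (e1 x) = f x := by simp [glue3, e1]
lemma glue3_e2 (f : Fin a → X) (g : Fin b → X) (h : Fin c → X) (x : Fin b) :
    glue3 f g h (e2 x) = g x := by simp [glue3, e2]
lemma glue3_e3 (f : Fin a → X) (g : Fin b → X) (h : Fin c → X) (x : Fin c) :
    glue3 f g h (e3 x) = h x := by simp [glue3, e3]

lemma fin_cases_add3 (p : Fin (a + b + c)) :
    (∃ x : Fin a, p = e1 x) ∨ (∃ x : Fin b, p = e2 x) ∨ (∃ x : Fin c, p = e3 x) := by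
  rcases fin_cases_add p with ⟨q, rfl⟩ | ⟨x, rfl⟩
  · rcases fin_cases_add q with ⟨x, rfl⟩ | ⟨x, rfl⟩
    · exact Or.inl ⟨x, rfl⟩
    · exact Or.inr (Or.inl ⟨x, rfl⟩)
  · exact Or.inr (Or.inr ⟨x, rfl⟩)

end Glue

end S10

namespace S10

variable {n : ℕ}

section FlipDef

variable {a c : ℕ} (χA : Matrix (Fin a) (Fin a) ℤ) (χC : Matrix (Fin c) (Fin c) ℤ)

/-- There is a χA-occurrence strictly north-west of the bound `(i,j)`. -/
def P1 (N : Matrix (Fin n) (Fin n) ℤ) (i j : ℕ) : Prop :=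
  ∃ r cc : Fin a → Fin n, Occ N χA r cc ∧ ∀ x, (r x : ℕ) < i ∧ (cc x : ℕ) < j

/-- There is a χC-occurrence weakly south-east of the bound `(i,j)`. -/
def P3 (N : Matrix (Fin n) (Fin n) ℤ) (i j : ℕ) : Prop :=
  ∃ r cc : Fin c → Fin n, Occ N χC r cc ∧ ∀ x, i ≤ (r x : ℕ) ∧ j ≤ (cc x : ℕ)

/-- The flip zone: positions with a χA-occurrence to the NW and a χC-occurrence
to the SE. -/
def Zn (N : Matrix (Fin n) (Fin n) ℤ) (i j : ℕ) : Prop :=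
  P1 χA N i j ∧ P3 χC N (i + 1) (j + 1)

open Classical in
/-- The sign-flipping involution. -/
noncomputable def Fm (N : Matrix (Fin n) (Fin n) ℤ) : Matrix (Fin n) (Fin n) ℤ :=
  Matrix.of fun i j => if Zn χA χC N (i : ℕ) (j : ℕ) then -N i j else N i j

variable {χA χC}

lemma Fm_apply_of_not (N : Matrix (Fin n) (Fin n) ℤ) {i j : Fin n}
    (h : ¬ Zn χA χC N (i : ℕ) (j : ℕ)) : Fm χA χC N i j = N i j := by
  simp [Fm, h]

lemma Fm_apply_of_mem (N : Matrix (Fin n) (Fin n) ℤ) {i j : Fin n}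
    (h : Zn χA χC N (i : ℕ) (j : ℕ)) : Fm χA χC N i j = -N i j := by
  simp [Fm, h]

lemma Fm_eq_zero_iff (N : Matrix (Fin n) (Fin n) ℤ) (i j : Fin n) :
    Fm χA χC N i j = 0 ↔ N i j = 0 := by
  by_cases h : Zn χA χC N (i : ℕ) (j : ℕ) <;> simp [Fm, h]

/-- Lemma C1: a NW occurrence of χA in `N` can be replaced by one valid in both
`N` and `Fm N`. -/
lemma C1 (N : Matrix (Fin n) (Fin n) ℤ) :
    ∀ i, ∀ j, P1 χA N i j →
      ∃ r cc : Fin a → Fin n, Occ N χA r cc ∧ Occ (Fm χA χC N) χA r cc ∧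
        ∀ x, (r x : ℕ) < i ∧ (cc x : ℕ) < j := by
  intro i
  induction i using Nat.strong_induction_on with
  | _ i IH =>
    rintro j ⟨r, cc, hocc, hb⟩
    by_cases hz : ∃ x y, N (r x) (cc y) ≠ 0 ∧ Zn χA χC N ((r x : ℕ)) ((cc y : ℕ))
    · obtain ⟨x, y, -, hZ⟩ := hz
      obtain ⟨r', cc', hA, hB, hb'⟩ := IH (r x) (hb x).1 (cc y) hZ.1
      exact ⟨r', cc', hA, hB, fun z =>
        ⟨lt_trans (hb' z).1 (hb x).1, lt_trans (hb' z).2 (hb y).2⟩⟩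
    · push_neg at hz
      refine ⟨r, cc, hocc, ⟨hocc.1, hocc.2.1, fun x y => ?_⟩, hb⟩
      by_cases h0 : N (r x) (cc y) = 0
      · have hx : χA x y = 0 := by rw [← hocc.2.2 x y, h0]
        rw [hx]; exact (Fm_eq_zero_iff N _ _).2 h0
      · rw [Fm_apply_of_not N (hz x y h0), hocc.2.2]

/-- Lemma C1': a NW occurrence of χA in `Fm N` can be replaced by one valid in
both `N` and `Fm N`. -/
lemma C1' (N : Matrix (Fin n) (Fin n) ℤ) (i j : ℕ) (h : P1 χA (Fm χA χC N) i j) :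
    ∃ r cc : Fin a → Fin n, Occ N χA r cc ∧ Occ (Fm χA χC N) χA r cc ∧
      ∀ x, (r x : ℕ) < i ∧ (cc x : ℕ) < j := by
  obtain ⟨r, cc, hocc, hb⟩ := h
  by_cases hz : ∃ x y, N (r x) (cc y) ≠ 0 ∧ Zn χA χC N ((r x : ℕ)) ((cc y : ℕ))
  · obtain ⟨x, y, -, hZ⟩ := hz
    obtain ⟨r', cc', hA, hB, hb'⟩ := C1 N (r x) (cc y) hZ.1
    exact ⟨r', cc', hA, hB, fun z =>
      ⟨lt_trans (hb' z).1 (hb x).1, lt_trans (hb' z).2 (hb y).2⟩⟩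
  · push_neg at hz
    refine ⟨r, cc, ⟨hocc.1, hocc.2.1, fun x y => ?_⟩, hocc, hb⟩
    by_cases h0 : N (r x) (cc y) = 0
    · have hx : Fm χA χC N (r x) (cc y) = 0 := (Fm_eq_zero_iff N _ _).2 h0
      rw [h0, ← hocc.2.2 x y, hx]
    · rw [← Fm_apply_of_not N (hz x y h0), hocc.2.2]

/-- Lemma C3 (fueled): a SE occurrence of χC in `N` can be replaced by one
valid in both `N` and `Fm N`. -/
lemma C3aux (N : Matrix (Fin n) (Fin n) ℤ) :
    ∀ m i j, n - i ≤ m → P3 χC N i j →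
      ∃ r cc : Fin c → Fin n, Occ N χC r cc ∧ Occ (Fm χA χC N) χC r cc ∧
        ∀ x, i ≤ (r x : ℕ) ∧ j ≤ (cc x : ℕ) := by
  intro m
  induction m with
  | zero =>
    rintro i j hm ⟨r, cc, hocc, hb⟩
    by_cases hz : ∃ x y, N (r x) (cc y) ≠ 0 ∧ Zn χA χC N ((r x : ℕ)) ((cc y : ℕ))
    · obtain ⟨x, -, -, -⟩ := hz
      have := (r x).isLt
      have := (hb x).1
      omega
    · push_neg at hz
      refine ⟨r, cc, hocc, ⟨hocc.1, hocc.2.1, fun x y => ?_⟩, hb⟩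
      by_cases h0 : N (r x) (cc y) = 0
      · have hx : χC x y = 0 := by rw [← hocc.2.2 x y, h0]
        rw [hx]; exact (Fm_eq_zero_iff N _ _).2 h0
      · rw [Fm_apply_of_not N (hz x y h0), hocc.2.2]
  | succ m IH =>
    rintro i j hm ⟨r, cc, hocc, hb⟩
    by_cases hz : ∃ x y, N (r x) (cc y) ≠ 0 ∧ Zn χA χC N ((r x : ℕ)) ((cc y : ℕ))
    · obtain ⟨x, y, -, hZ⟩ := hz
      have h1 := (hb x).1
      have h2 := (r x).isLt
      obtain ⟨r', cc', hA, hB, hb'⟩ := IH ((r x : ℕ) + 1) ((cc y : ℕ) + 1) (by omega) hZ.2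
      exact ⟨r', cc', hA, hB, fun z => ⟨by have := (hb' z).1; omega,
        by have := (hb' z).2; have := (hb y).2; omega⟩⟩
    · push_neg at hz
      refine ⟨r, cc, hocc, ⟨hocc.1, hocc.2.1, fun x y => ?_⟩, hb⟩
      by_cases h0 : N (r x) (cc y) = 0
      · have hx : χC x y = 0 := by rw [← hocc.2.2 x y, h0]
        rw [hx]; exact (Fm_eq_zero_iff N _ _).2 h0
      · rw [Fm_apply_of_not N (hz x y h0), hocc.2.2]

lemma C3 (N : Matrix (Fin n) (Fin n) ℤ) (i j : ℕ) (h : P3 χC N i j) :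
    ∃ r cc : Fin c → Fin n, Occ N χC r cc ∧ Occ (Fm χA χC N) χC r cc ∧
      ∀ x, i ≤ (r x : ℕ) ∧ j ≤ (cc x : ℕ) :=
  C3aux N (n - i) i j le_rfl h

lemma C3' (N : Matrix (Fin n) (Fin n) ℤ) (i j : ℕ) (h : P3 χC (Fm χA χC N) i j) :
    ∃ r cc : Fin c → Fin n, Occ N χC r cc ∧ Occ (Fm χA χC N) χC r cc ∧
      ∀ x, i ≤ (r x : ℕ) ∧ j ≤ (cc x : ℕ) := by
  obtain ⟨r, cc, hocc, hb⟩ := h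
  by_cases hz : ∃ x y, N (r x) (cc y) ≠ 0 ∧ Zn χA χC N ((r x : ℕ)) ((cc y : ℕ))
  · obtain ⟨x, y, -, hZ⟩ := hz
    obtain ⟨r', cc', hA, hB, hb'⟩ := C3 N ((r x : ℕ) + 1) ((cc y : ℕ) + 1) hZ.2
    exact ⟨r', cc', hA, hB, fun z => ⟨by have := (hb' z).1; have := (hb x).1; omega,
      by have := (hb' z).2; have := (hb y).2; omega⟩⟩
  · push_neg at hz
    refine ⟨r, cc, ⟨hocc.1, hocc.2.1, fun x y => ?_⟩, hocc, hb⟩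
    by_cases h0 : N (r x) (cc y) = 0
    · have hx : Fm χA χC N (r x) (cc y) = 0 := (Fm_eq_zero_iff N _ _).2 h0
      rw [h0, ← hocc.2.2 x y, hx]
    · rw [← Fm_apply_of_not N (hz x y h0), hocc.2.2]

lemma P1_Fm_iff (N : Matrix (Fin n) (Fin n) ℤ) (i j : ℕ) :
    P1 χA (Fm χA χC N) i j ↔ P1 χA N i j := by
  constructor
  · intro h
    obtain ⟨r, cc, hA, -, hb⟩ := C1' N i j h
    exact ⟨r, cc, hA, hb⟩
  · rintro ⟨r, cc, hocc, hb⟩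
    obtain ⟨r', cc', -, hB, hb'⟩ := C1 N i j ⟨r, cc, hocc, hb⟩
    exact ⟨r', cc', hB, hb'⟩

lemma P3_Fm_iff (N : Matrix (Fin n) (Fin n) ℤ) (i j : ℕ) :
    P3 χC (Fm χA χC N) i j ↔ P3 χC N i j := by
  constructor
  · intro h
    obtain ⟨r, cc, hA, -, hb⟩ := C3' N i j h
    exact ⟨r, cc, hA, hb⟩
  · rintro ⟨r, cc, hocc, hb⟩
    obtain ⟨r', cc', -, hB, hb'⟩ := C3 N i j ⟨r, cc, hocc, hb⟩
    exact ⟨r', cc', hB, hb'⟩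

lemma Zn_Fm_iff (N : Matrix (Fin n) (Fin n) ℤ) (i j : ℕ) :
    Zn χA χC (Fm χA χC N) i j ↔ Zn χA χC N i j := by
  unfold Zn
  rw [P1_Fm_iff, P3_Fm_iff]

lemma Fm_Fm (N : Matrix (Fin n) (Fin n) ℤ) : Fm χA χC (Fm χA χC N) = N := by
  ext i j
  by_cases h : Zn χA χC N ((i : ℕ)) ((j : ℕ))
  · rw [Fm_apply_of_mem _ ((Zn_Fm_iff N _ _).2 h), Fm_apply_of_mem _ h, neg_neg]
  · rw [Fm_apply_of_not _ (fun hh => h ((Zn_Fm_iff N _ _).1 hh)), Fm_apply_of_not _ h]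

lemma Fm_signed {N : Matrix (Fin n) (Fin n) ℤ} (hN : IsSignedPermMatrix N) :
    IsSignedPermMatrix (Fm χA χC N) := by
  refine ⟨fun i j => ?_, fun i => ?_, fun j => ?_⟩
  · by_cases h : Zn χA χC N ((i : ℕ)) ((j : ℕ))
    · rw [Fm_apply_of_mem _ h]
      rcases hN.1 i j with h' | h' | h' <;> simp [h']
    · rw [Fm_apply_of_not _ h]
      exact hN.1 i j
  · simpa only [ne_eq, Fm_eq_zero_iff] using hN.2.1 i
  · simpa only [ne_eq, Fm_eq_zero_iff] using hN.2.2 j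

end FlipDef

lemma isSigned_neg {k : ℕ} {χ : Matrix (Fin k) (Fin k) ℤ} (h : IsSignedPermMatrix χ) :
    IsSignedPermMatrix (-χ) := by
  refine ⟨fun i j => ?_, fun i => by simpa using h.2.1 i, fun j => by simpa using h.2.2 j⟩
  rcases h.1 i j with h' | h' | h' <;> simp [h']

lemma row_zero {k : ℕ} {N : Matrix (Fin n) (Fin n) ℤ} (hN : IsSignedPermMatrix N)
    {χ : Matrix (Fin k) (Fin k) ℤ} (hχ : IsSignedPermMatrix χ)
    {r cc : Fin k → Fin n} (hocc : ∀ x y, N (r x) (cc y) = χ x y)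
    (x : Fin k) (j : Fin n) (hj : ∀ y, cc y ≠ j) : N (r x) j = 0 := by
  obtain ⟨y₀, hy₀, -⟩ := hχ.2.1 x
  have hne : N (r x) (cc y₀) ≠ 0 := by rw [hocc]; exact hy₀
  obtain ⟨j₀, -, huniq⟩ := hN.2.1 (r x)
  by_contra h
  exact hj y₀ (((huniq _ hne).trans (huniq j h).symm))

section Key

variable {a b c : ℕ} {χA : Matrix (Fin a) (Fin a) ℤ} {χB : Matrix (Fin b) (Fin b) ℤ}
  {χC : Matrix (Fin c) (Fin c) ℤ}

/-- The key step: if `M` contains `diag(χA,χB,χC)` then its flip contains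
`diag(χA,-χB,χC)`. -/
lemma key (h1 : IsSignedPermMatrix χA) (h2 : IsSignedPermMatrix χB)
    (h3 : IsSignedPermMatrix χC) (M : Matrix (Fin n) (Fin n) ℤ) (hM : IsSignedPermMatrix M)
    (hcont : ContainsPattern M (blockDiag3 χA χB χC)) :
    ContainsPattern (Fm χA χC M) (blockDiag3 χA (-χB) χC) := by
  obtain ⟨r, cc, hr, hc, hval⟩ := hcont
  have hFsp : IsSignedPermMatrix (Fm χA χC M) := Fm_signed hM
  -- the three diagonal sub-occurrences in M
  have hocc1 : Occ M χA (fun x => r (e1 x)) (fun x => cc (e1 x)) :=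
    ⟨hr.comp e1_strictMono, hc.comp e1_strictMono,
      fun x y => (hval (e1 x) (e1 y)).trans (bd3_11 χA χB χC x y)⟩
  have hocc2 : Occ M χB (fun x => r (e2 x)) (fun x => cc (e2 x)) :=
    ⟨hr.comp e2_strictMono, hc.comp e2_strictMono,
      fun x y => (hval (e2 x) (e2 y)).trans (bd3_22 χA χB χC x y)⟩
  have hocc3 : Occ M χC (fun x => r (e3 x)) (fun x => cc (e3 x)) :=
    ⟨hr.comp e3_strictMono, hc.comp e3_strictMono,
      fun x y => (hval (e3 x) (e3 y)).trans (bd3_33 χA χB χC x y)⟩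
  -- every middle position lies in the flip zone
  have hmid : ∀ (x y : Fin b), Zn χA χC M ((r (e2 x) : ℕ)) ((cc (e2 y) : ℕ)) := by
    intro x y
    constructor
    · refine ⟨fun z => r (e1 z), fun z => cc (e1 z), hocc1, fun z => ⟨?_, ?_⟩⟩
      · exact hr (show (e1 z : Fin (a+b+c)) < e2 x by
          simp only [Fin.lt_def, e1_val, e2_val]; omega)
      · exact hc (show (e1 z : Fin (a+b+c)) < e2 y by
          simp only [Fin.lt_def, e1_val, e2_val]; omega)
    · refine ⟨fun z => r (e3 z), fun z => cc (e3 z), hocc3, fun z => ⟨?_, ?_⟩⟩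
      · have h' := Fin.lt_def.mp (hr (show (e2 x : Fin (a+b+c)) < e3 z by
          simp only [Fin.lt_def, e2_val, e3_val]; omega))
        show _ + 1 ≤ ((r (e3 z) : Fin n) : ℕ)
        omega
      · have h' := Fin.lt_def.mp (hc (show (e2 y : Fin (a+b+c)) < e3 z by
          simp only [Fin.lt_def, e2_val, e3_val]; omega))
        show _ + 1 ≤ ((cc (e3 z) : Fin n) : ℕ)
        omega
  -- the middle occurrence, flipped
  have hocc2' : Occ (Fm χA χC M) (-χB) (fun x => r (e2 x)) (fun x => cc (e2 x)) := by
    refine ⟨hocc2.1, hocc2.2.1, fun x y => ?_⟩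
    rw [Fm_apply_of_mem M (hmid x y), hocc2.2.2 x y, Matrix.neg_apply]
  -- a zone-free first occurrence
  set i1 : ℕ := if h : a < a + b + c then ((r ⟨a, h⟩ : Fin n) : ℕ) else n with hi1
  set j1 : ℕ := if h : a < a + b + c then ((cc ⟨a, h⟩ : Fin n) : ℕ) else n with hj1
  have hP1 : P1 χA M i1 j1 := by
    refine ⟨fun x => r (e1 x), fun x => cc (e1 x), hocc1, fun x => ⟨?_, ?_⟩⟩
    · rw [hi1]
      split
      · next h =>
          exact hr (show (e1 x : Fin (a+b+c)) < ⟨a, h⟩ by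
            simp only [Fin.lt_def, e1_val]; exact x.isLt)
      · exact (r _).isLt
    · rw [hj1]
      split
      · next h =>
          exact hc (show (e1 x : Fin (a+b+c)) < ⟨a, h⟩ by
            simp only [Fin.lt_def, e1_val]; exact x.isLt)
      · exact (cc _).isLt
  obtain ⟨r1, c1, hocc1M, hocc1F, hb1⟩ := C1 M i1 j1 hP1
  -- separations of the first block from the others
  have hsep12r : ∀ z (x : Fin b), (r1 z : ℕ) < ((r (e2 x) : Fin n) : ℕ) := by
    intro z x
    have h' : a < a + b + c := by have := x.isLt; omega
    have hle : (⟨a, h'⟩ : Fin (a+b+c)) ≤ e2 x := by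
      simp only [Fin.le_def, e2_val]; omega
    have h1' := (hb1 z).1
    rw [hi1, dif_pos h'] at h1'
    have h2' := Fin.le_def.mp (hr.monotone hle)
    omega
  have hsep12c : ∀ z (x : Fin b), (c1 z : ℕ) < ((cc (e2 x) : Fin n) : ℕ) := by
    intro z x
    have h' : a < a + b + c := by have := x.isLt; omega
    have hle : (⟨a, h'⟩ : Fin (a+b+c)) ≤ e2 x := by
      simp only [Fin.le_def, e2_val]; omega
    have h1' := (hb1 z).2
    rw [hj1, dif_pos h'] at h1'
    have h2' := Fin.le_def.mp (hc.monotone hle)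
    omega
  have hsep13r0 : ∀ z (x : Fin c), (r1 z : ℕ) < ((r (e3 x) : Fin n) : ℕ) := by
    intro z x
    have h' : a < a + b + c := by have := x.isLt; omega
    have hle : (⟨a, h'⟩ : Fin (a+b+c)) ≤ e3 x := by
      simp only [Fin.le_def, e3_val]; omega
    have h1' := (hb1 z).1
    rw [hi1, dif_pos h'] at h1'
    have h2' := Fin.le_def.mp (hr.monotone hle)
    omega
  have hsep13c0 : ∀ z (x : Fin c), (c1 z : ℕ) < ((cc (e3 x) : Fin n) : ℕ) := by
    intro z x
    have h' : a < a + b + c := by have := x.isLt; omega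
    have hle : (⟨a, h'⟩ : Fin (a+b+c)) ≤ e3 x := by
      simp only [Fin.le_def, e3_val]; omega
    have h1' := (hb1 z).2
    rw [hj1, dif_pos h'] at h1'
    have h2' := Fin.le_def.mp (hc.monotone hle)
    omega
  -- a zone-free third occurrence
  set i3 : ℕ := (Finset.univ.sup fun z => (r1 z : ℕ) + 1) ⊔
    (if h : a + b - 1 < a + b + c ∧ 0 < a + b
      then ((r ⟨a + b - 1, h.1⟩ : Fin n) : ℕ) + 1 else 0) with hi3
  set j3 : ℕ := (Finset.univ.sup fun z => (c1 z : ℕ) + 1) ⊔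
    (if h : a + b - 1 < a + b + c ∧ 0 < a + b
      then ((cc ⟨a + b - 1, h.1⟩ : Fin n) : ℕ) + 1 else 0) with hj3
  have hP3 : P3 χC M i3 j3 := by
    refine ⟨fun x => r (e3 x), fun x => cc (e3 x), hocc3, fun x => ⟨?_, ?_⟩⟩
    · rw [hi3]
      show _ ≤ ((r (e3 x) : Fin n) : ℕ)
      refine max_le (Finset.sup_le fun z _ => by have := hsep13r0 z x; omega) ?_
      split
      · next h =>
          have h' := Fin.lt_def.mp (hr (show (⟨a + b - 1, h.1⟩ : Fin (a+b+c)) < e3 x by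
            simp only [Fin.lt_def, e3_val]; omega))
          omega
      · exact Nat.zero_le _
    · rw [hj3]
      show _ ≤ ((cc (e3 x) : Fin n) : ℕ)
      refine max_le (Finset.sup_le fun z _ => by have := hsep13c0 z x; omega) ?_
      split
      · next h =>
          have h' := Fin.lt_def.mp (hc (show (⟨a + b - 1, h.1⟩ : Fin (a+b+c)) < e3 x by
            simp only [Fin.lt_def, e3_val]; omega))
          omega
      · exact Nat.zero_le _
  obtain ⟨r3, c3, hocc3M, hocc3F, hb3⟩ := C3 M i3 j3 hP3
  -- separations of the third block from the others
  have hsep13r : ∀ z x, (r1 z : ℕ) < (r3 x : ℕ) := by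
    intro z x
    have h1' := (hb3 x).1
    rw [hi3] at h1'
    have h2' : (r1 z : ℕ) + 1 ≤ Finset.univ.sup fun z => (r1 z : ℕ) + 1 :=
      Finset.le_sup (f := fun z => (r1 z : ℕ) + 1) (Finset.mem_univ z)
    have h3' := le_trans (le_max_left _ _) h1'
    omega
  have hsep13c : ∀ z x, (c1 z : ℕ) < (c3 x : ℕ) := by
    intro z x
    have h1' := (hb3 x).2
    rw [hj3] at h1'
    have h2' : (c1 z : ℕ) + 1 ≤ Finset.univ.sup fun z => (c1 z : ℕ) + 1 :=
      Finset.le_sup (f := fun z => (c1 z : ℕ) + 1) (Finset.mem_univ z)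
    have h3' := le_trans (le_max_left _ _) h1'
    omega
  have hsep23r : ∀ (z : Fin b) x, ((r (e2 z) : Fin n) : ℕ) < (r3 x : ℕ) := by
    intro z x
    have hcond : a + b - 1 < a + b + c ∧ 0 < a + b := by have := z.isLt; omega
    have h1' := (hb3 x).1
    rw [hi3] at h1'
    have h3' := le_trans (le_max_right _ _) h1'
    rw [dif_pos hcond] at h3'
    have hle : (e2 z : Fin (a+b+c)) ≤ ⟨a + b - 1, hcond.1⟩ := by
      simp only [Fin.le_def, e2_val]; omega
    have h2' := Fin.le_def.mp (hr.monotone hle)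
    omega
  have hsep23c : ∀ (z : Fin b) x, ((cc (e2 z) : Fin n) : ℕ) < (c3 x : ℕ) := by
    intro z x
    have hcond : a + b - 1 < a + b + c ∧ 0 < a + b := by have := z.isLt; omega
    have h1' := (hb3 x).2
    rw [hj3] at h1'
    have h3' := le_trans (le_max_right _ _) h1'
    rw [dif_pos hcond] at h3'
    have hle : (e2 z : Fin (a+b+c)) ≤ ⟨a + b - 1, hcond.1⟩ := by
      simp only [Fin.le_def, e2_val]; omega
    have h2' := Fin.le_def.mp (hc.monotone hle)
    omega
  -- assemble the occurrence of diag(χA, -χB, χC) in Fm M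
  refine ⟨glue3 r1 (fun x => r (e2 x)) r3, glue3 c1 (fun x => cc (e2 x)) c3, ?_, ?_, ?_⟩
  · exact glue2_strictMono
      (glue2_strictMono hocc1F.1 hocc2'.1 fun x y => Fin.lt_def.mpr (hsep12r x y))
      hocc3F.1
      (fun p x => by
        rcases fin_cases_add p with ⟨z, rfl⟩ | ⟨z, rfl⟩ <;>
          simp only [glue2_left, glue2_right]
        · exact Fin.lt_def.mpr (hsep13r z x)
        · exact Fin.lt_def.mpr (hsep23r z x))
  · exact glue2_strictMono
      (glue2_strictMono hocc1F.2.1 hocc2'.2.1 fun x y => Fin.lt_def.mpr (hsep12c x y))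
      hocc3F.2.1
      (fun p x => by
        rcases fin_cases_add p with ⟨z, rfl⟩ | ⟨z, rfl⟩ <;>
          simp only [glue2_left, glue2_right]
        · exact Fin.lt_def.mpr (hsep13c z x)
        · exact Fin.lt_def.mpr (hsep23c z x))
  · intro p q
    rcases fin_cases_add3 p with ⟨x, rfl⟩ | ⟨x, rfl⟩ | ⟨x, rfl⟩ <;>
      rcases fin_cases_add3 q with ⟨y, rfl⟩ | ⟨y, rfl⟩ | ⟨y, rfl⟩
    · rw [glue3_e1, glue3_e1, bd3_11]
      exact hocc1F.2.2 x y
    · rw [glue3_e1, glue3_e2, bd3_12]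
      exact row_zero hFsp h1 hocc1F.2.2 x _
        (fun z => ne_of_lt (Fin.lt_def.mpr (hsep12c z y)))
    · rw [glue3_e1, glue3_e3, bd3_13]
      exact row_zero hFsp h1 hocc1F.2.2 x _
        (fun z => ne_of_lt (Fin.lt_def.mpr (hsep13c z y)))
    · rw [glue3_e2, glue3_e1, bd3_21]
      exact row_zero hFsp (isSigned_neg h2) hocc2'.2.2 x _
        (fun z => ne_of_gt (Fin.lt_def.mpr (hsep12c y z)))
    · rw [glue3_e2, glue3_e2, bd3_22]
      exact hocc2'.2.2 x y
    · rw [glue3_e2, glue3_e3, bd3_23]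
      exact row_zero hFsp (isSigned_neg h2) hocc2'.2.2 x _
        (fun z => ne_of_lt (Fin.lt_def.mpr (hsep23c z y)))
    · rw [glue3_e3, glue3_e1, bd3_31]
      exact row_zero hFsp h3 hocc3F.2.2 x _
        (fun z => ne_of_gt (Fin.lt_def.mpr (hsep13c y z)))
    · rw [glue3_e3, glue3_e2, bd3_32]
      exact row_zero hFsp h3 hocc3F.2.2 x _
        (fun z => ne_of_gt (Fin.lt_def.mpr (hsep23c y z)))
    · rw [glue3_e3, glue3_e3, bd3_33]
      exact hocc3F.2.2 x y

end Key

end S10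

/-- diag(χ₁,χ₂,χ₃) and diag(χ₁,−χ₂,χ₃) are Wilf equivalent. -/
theorem stmt10 {a b c : ℕ} (χ₁ : Matrix (Fin a) (Fin a) ℤ) (χ₂ : Matrix (Fin b) (Fin b) ℤ)
    (χ₃ : Matrix (Fin c) (Fin c) ℤ)
    (h1 : IsSignedPermMatrix χ₁) (h2 : IsSignedPermMatrix χ₂) (h3 : IsSignedPermMatrix χ₃) :
    ∀ n : ℕ, 1 ≤ n →
      BAvoidCount n (blockDiag3 χ₁ χ₂ χ₃) = BAvoidCount n (blockDiag3 χ₁ (-χ₂) χ₃) := by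
  intro n _
  have hmap : ∀ (M : Matrix (Fin n) (Fin n) ℤ), IsSignedPermMatrix M →
      (ContainsPattern M (blockDiag3 χ₁ χ₂ χ₃) ↔
        ContainsPattern (S10.Fm χ₁ χ₃ M) (blockDiag3 χ₁ (-χ₂) χ₃)) := by
    intro M hM
    constructor
    · exact S10.key h1 h2 h3 M hM
    · intro h
      have hk := S10.key h1 (S10.isSigned_neg h2) h3 (S10.Fm χ₁ χ₃ M) (S10.Fm_signed hM) h
      rwa [S10.Fm_Fm, neg_neg] at hk
  have hinj : Function.Injective
      (S10.Fm χ₁ χ₃ : Matrix (Fin n) (Fin n) ℤ → Matrix (Fin n) (Fin n) ℤ) := by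
    intro M N h
    have h' := congrArg (S10.Fm χ₁ χ₃) h
    rwa [S10.Fm_Fm, S10.Fm_Fm] at h'
  have himg : S10.Fm χ₁ χ₃ '' {M : Matrix (Fin n) (Fin n) ℤ |
      IsSignedPermMatrix M ∧ ¬ ContainsPattern M (blockDiag3 χ₁ χ₂ χ₃)} =
      {M : Matrix (Fin n) (Fin n) ℤ |
        IsSignedPermMatrix M ∧ ¬ ContainsPattern M (blockDiag3 χ₁ (-χ₂) χ₃)} := by
    ext N
    constructor
    · rintro ⟨M, ⟨hsp, hav⟩, rfl⟩
      exact ⟨S10.Fm_signed hsp, fun hcon => hav ((hmap M hsp).mpr hcon)⟩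
    · rintro ⟨hsp, hav⟩
      refine ⟨S10.Fm χ₁ χ₃ N, ⟨S10.Fm_signed hsp, fun hcon => ?_⟩, S10.Fm_Fm N⟩
      have hk := (hmap (S10.Fm χ₁ χ₃ N) (S10.Fm_signed hsp)).mp hcon
      rw [S10.Fm_Fm] at hk
      exact hav hk
  unfold BAvoidCount
  rw [← himg, Set.ncard_image_of_injective _ hinj]
end

section
/- Let χ₁, χ₂, χ₃ be signed permutation matrices, at least two of which are symmetric. Then diag(χ₁,χ₂,χ₃) and diag(χ₁,−χ₂,χ₃) are I-Wilf equivalent: for every n ≥ 1, the number of signed involutions in SI_n avoiding diag(χ₁,χ₂,χ₃) equals the number of signed involutions in SI_n avoiding diag(χ₁,−χ₂,χ₃). -/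
open Matrix

section Aux
open Matrix
variable {n a b k k₁ k₂ : ℕ}

lemma sia_congr {k₁ k₂ : ℕ} (τ₁ : Matrix (Fin k₁) (Fin k₁) ℤ) (τ₂ : Matrix (Fin k₂) (Fin k₂) ℤ)
    (h : ∀ M : Matrix (Fin n) (Fin n) ℤ, ContainsPattern M τ₁ ↔ ContainsPattern M τ₂) :
    SIAvoidCount n τ₁ = SIAvoidCount n τ₂ := by
  unfold SIAvoidCount
  congr 1
  ext M
  simp only [Set.mem_setOf_eq, h M]

lemma ncard_eq_of_invol {α : Type*} (F : α → α) (S T : Set α) (hF : ∀ x, F (F x) = x)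
    (h1 : ∀ x ∈ S, F x ∈ T) (h2 : ∀ x ∈ T, F x ∈ S) : S.ncard = T.ncard := by
  have himg : F '' S = T := by
    apply subset_antisymm
    · rintro _ ⟨x, hx, rfl⟩; exact h1 x hx
    · intro y hy; exact ⟨F y, h2 y hy, hF y⟩
  rw [← himg]
  refine (Set.ncard_image_of_injOn ?_).symm
  intro x _ y _ h
  have : F (F x) = F (F y) := by rw [h]
  rwa [hF x, hF y] at this

lemma neg_isSignedPerm {M : Matrix (Fin n) (Fin n) ℤ} (h : IsSignedPermMatrix M) :
    IsSignedPermMatrix (-M) := by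
  obtain ⟨h0, hr, hc⟩ := h
  refine ⟨fun i j => ?_, fun i => ?_, fun j => ?_⟩
  · rcases h0 i j with h | h | h <;> simp [h]
  · obtain ⟨j, hj, hu⟩ := hr i
    exact ⟨j, by simpa using hj, fun y hy => hu y (by simpa using hy)⟩
  · obtain ⟨i, hi, hu⟩ := hc j
    exact ⟨i, by simpa using hi, fun y hy => hu y (by simpa using hy)⟩

lemma neg_isSymm {M : Matrix (Fin n) (Fin n) ℤ} (h : M.IsSymm) : (-M).IsSymm := by
  unfold Matrix.IsSymm at *
  rw [transpose_neg, h]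

lemma isSymm_apply {M : Matrix (Fin n) (Fin n) ℤ} (h : M.IsSymm) (i j : Fin n) :
    M j i = M i j := by
  have := congrFun (congrFun h i) j
  simpa using this

lemma contains_neg {M : Matrix (Fin n) (Fin n) ℤ} {τ : Matrix (Fin k) (Fin k) ℤ} :
    ContainsPattern M τ ↔ ContainsPattern (-M) (-τ) := by
  constructor <;> rintro ⟨r, c, hr, hc, h⟩ <;> exact ⟨r, c, hr, hc, fun p q => by
    have := h p q; simp at this ⊢; omega⟩

lemma sia_neg (τ : Matrix (Fin k) (Fin k) ℤ) : SIAvoidCount n τ = SIAvoidCount n (-τ) := by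
  unfold SIAvoidCount
  apply ncard_eq_of_invol (fun M => -M) _ _ (fun M => by simp)
  · rintro M ⟨hsp, hsym, havoid⟩
    exact ⟨neg_isSignedPerm hsp, neg_isSymm hsym, fun hcon => havoid (by
      have := contains_neg.mpr hcon; simpa using this)⟩
  · rintro M ⟨hsp, hsym, havoid⟩
    refine ⟨neg_isSignedPerm hsp, neg_isSymm hsym, fun hcon => havoid ?_⟩
    have := contains_neg.mp hcon
    simpa using this

end Aux
section Aux2
open Matrix
set_option maxHeartbeats 1000000
variable {n a b c : ℕ}

lemma blockDiag2_ll (A : Matrix (Fin a) (Fin a) ℤ) (B : Matrix (Fin b) (Fin b) ℤ)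
    (i j : Fin a) : blockDiag2 A B (Fin.castAdd b i) (Fin.castAdd b j) = A i j := by
  simp [blockDiag2, finSumFinEquiv_symm_apply_castAdd]

lemma blockDiag2_lr (A : Matrix (Fin a) (Fin a) ℤ) (B : Matrix (Fin b) (Fin b) ℤ)
    (i : Fin a) (j : Fin b) : blockDiag2 A B (Fin.castAdd b i) (Fin.natAdd a j) = 0 := by
  simp [blockDiag2, finSumFinEquiv_symm_apply_castAdd, finSumFinEquiv_symm_apply_natAdd]

lemma blockDiag2_rl (A : Matrix (Fin a) (Fin a) ℤ) (B : Matrix (Fin b) (Fin b) ℤ)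
    (i : Fin b) (j : Fin a) : blockDiag2 A B (Fin.natAdd a i) (Fin.castAdd b j) = 0 := by
  simp [blockDiag2, finSumFinEquiv_symm_apply_castAdd, finSumFinEquiv_symm_apply_natAdd]

lemma blockDiag2_rr (A : Matrix (Fin a) (Fin a) ℤ) (B : Matrix (Fin b) (Fin b) ℤ)
    (i j : Fin b) : blockDiag2 A B (Fin.natAdd a i) (Fin.natAdd a j) = B i j := by
  simp [blockDiag2, finSumFinEquiv_symm_apply_natAdd]

lemma blockDiag2_apply (A : Matrix (Fin a) (Fin a) ℤ) (B : Matrix (Fin b) (Fin b) ℤ)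
    (i j : Fin (a + b)) :
    blockDiag2 A B i j =
      if hi : (i : ℕ) < a then
        (if hj : (j : ℕ) < a then A ⟨i, hi⟩ ⟨j, hj⟩ else 0)
      else
        (if hj : (j : ℕ) < a then 0
         else B ⟨(i : ℕ) - a, by omega⟩ ⟨(j : ℕ) - a, by omega⟩) := by
  by_cases hi : (i : ℕ) < a <;> by_cases hj : (j : ℕ) < a
  · rw [dif_pos hi, dif_pos hj]
    have h1 : i = Fin.castAdd b ⟨i, hi⟩ := Fin.ext (by simp)
    have h2 : j = Fin.castAdd b ⟨j, hj⟩ := Fin.ext (by simp)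
    conv_lhs => rw [h1, h2, blockDiag2_ll]
  · rw [dif_pos hi, dif_neg hj]
    have h1 : i = Fin.castAdd b ⟨i, hi⟩ := Fin.ext (by simp)
    have h2 : j = Fin.natAdd a ⟨(j : ℕ) - a, by omega⟩ := Fin.ext (by simp; omega)
    conv_lhs => rw [h1, h2, blockDiag2_lr]
  · rw [dif_neg hi, dif_pos hj]
    have h1 : i = Fin.natAdd a ⟨(i : ℕ) - a, by omega⟩ := Fin.ext (by simp; omega)
    have h2 : j = Fin.castAdd b ⟨j, hj⟩ := Fin.ext (by simp)
    conv_lhs => rw [h1, h2, blockDiag2_rl]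
  · rw [dif_neg hi, dif_neg hj]
    have h1 : i = Fin.natAdd a ⟨(i : ℕ) - a, by omega⟩ := Fin.ext (by simp; omega)
    have h2 : j = Fin.natAdd a ⟨(j : ℕ) - a, by omega⟩ := Fin.ext (by simp; omega)
    conv_lhs => rw [h1, h2, blockDiag2_rr]

lemma blockDiag2_neg (A : Matrix (Fin a) (Fin a) ℤ) (B : Matrix (Fin b) (Fin b) ℤ) :
    -(blockDiag2 A B) = blockDiag2 (-A) (-B) := by
  ext i j
  simp only [neg_apply, blockDiag2_apply]
  split_ifs <;> simp

lemma blockDiag2_isSymm {A : Matrix (Fin a) (Fin a) ℤ} {B : Matrix (Fin b) (Fin b) ℤ}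
    (hA : A.IsSymm) (hB : B.IsSymm) : (blockDiag2 A B).IsSymm := by
  unfold Matrix.IsSymm
  ext i j
  rw [transpose_apply, blockDiag2_apply, blockDiag2_apply]
  split_ifs
  · exact isSymm_apply hA _ _
  · rfl
  · rfl
  · exact isSymm_apply hB _ _

lemma blockDiag2_isSignedPerm {A : Matrix (Fin a) (Fin a) ℤ} {B : Matrix (Fin b) (Fin b) ℤ}
    (hA : IsSignedPermMatrix A) (hB : IsSignedPermMatrix B) :
    IsSignedPermMatrix (blockDiag2 A B) := by
  obtain ⟨hA0, hAr, hAc⟩ := hA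
  obtain ⟨hB0, hBr, hBc⟩ := hB
  refine ⟨fun i j => ?_, fun i => ?_, fun j => ?_⟩
  · rw [blockDiag2_apply]
    split_ifs
    · exact hA0 _ _
    · exact Or.inl rfl
    · exact Or.inl rfl
    · exact hB0 _ _
  · by_cases hi : (i : ℕ) < a
    · obtain ⟨j0, hj0, hju⟩ := hAr ⟨i, hi⟩
      refine ⟨⟨(j0 : ℕ), by omega⟩, ?_, ?_⟩
      · show blockDiag2 A B i _ ≠ 0
        rw [blockDiag2_apply]
        simp only [hi, dif_pos]
        have : ((⟨(j0 : ℕ), by omega⟩ : Fin (a+b)) : ℕ) < a := j0.2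
        rw [dif_pos this]
        simpa using hj0
      · intro y hy
        rw [blockDiag2_apply] at hy
        simp only [hi, dif_pos] at hy
        by_cases hya : (y : ℕ) < a
        · rw [dif_pos hya] at hy
          have := hju ⟨y, hya⟩ hy
          apply Fin.ext
          simpa using congrArg Fin.val this
        · rw [dif_neg hya] at hy
          exact absurd rfl hy
    · obtain ⟨j0, hj0, hju⟩ := hBr ⟨(i : ℕ) - a, by omega⟩
      refine ⟨⟨a + (j0 : ℕ), by omega⟩, ?_, ?_⟩
      · show blockDiag2 A B i _ ≠ 0
        rw [blockDiag2_apply]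
        rw [dif_neg hi]
        have hja : ¬ ((⟨a + (j0 : ℕ), by omega⟩ : Fin (a+b)) : ℕ) < a := by simp
        rw [dif_neg hja]
        have : (⟨(⟨a + (j0 : ℕ), by omega⟩ : Fin (a+b)) - a, by omega⟩ : Fin b) = j0 := by
          apply Fin.ext; simp
        rw [this]
        exact hj0
      · intro y hy
        rw [blockDiag2_apply, dif_neg hi] at hy
        by_cases hya : (y : ℕ) < a
        · rw [dif_pos hya] at hy
          exact absurd rfl hy
        · rw [dif_neg hya] at hy
          have := hju _ hy
          apply Fin.ext
          have := congrArg Fin.val this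
          simp at this ⊢
          omega
  · by_cases hj : (j : ℕ) < a
    · obtain ⟨i0, hi0, hiu⟩ := hAc ⟨j, hj⟩
      refine ⟨⟨(i0 : ℕ), by omega⟩, ?_, ?_⟩
      · show blockDiag2 A B _ j ≠ 0
        rw [blockDiag2_apply]
        have : ((⟨(i0 : ℕ), by omega⟩ : Fin (a+b)) : ℕ) < a := i0.2
        rw [dif_pos this, dif_pos hj]
        simpa using hi0
      · intro y hy
        rw [blockDiag2_apply] at hy
        by_cases hya : (y : ℕ) < a
        · rw [dif_pos hya, dif_pos hj] at hy
          have := hiu ⟨y, hya⟩ hy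
          apply Fin.ext
          simpa using congrArg Fin.val this
        · rw [dif_neg hya, dif_pos hj] at hy
          exact absurd rfl hy
    · obtain ⟨i0, hi0, hiu⟩ := hBc ⟨(j : ℕ) - a, by omega⟩
      refine ⟨⟨a + (i0 : ℕ), by omega⟩, ?_, ?_⟩
      · show blockDiag2 A B _ j ≠ 0
        rw [blockDiag2_apply]
        have hia : ¬ ((⟨a + (i0 : ℕ), by omega⟩ : Fin (a+b)) : ℕ) < a := by simp
        rw [dif_neg hia, dif_neg hj]
        have : (⟨(⟨a + (i0 : ℕ), by omega⟩ : Fin (a+b)) - a, by omega⟩ : Fin b) = i0 := by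
          apply Fin.ext; simp
        rw [this]
        exact hi0
      · intro y hy
        rw [blockDiag2_apply] at hy
        by_cases hya : (y : ℕ) < a
        · rw [dif_pos hya, dif_neg hj] at hy
          exact absurd rfl hy
        · rw [dif_neg hya, dif_neg hj] at hy
          have := hiu _ hy
          apply Fin.ext
          have := congrArg Fin.val this
          simp at this ⊢
          omega

end Aux2
section Aux3
open Matrix
set_option linter.unnecessarySeqFocus false
set_option maxHeartbeats 2000000
variable {n a b c : ℕ}

lemma contains_finCongr {n k₁ k₂ : ℕ} (h : k₁ = k₂) (M : Matrix (Fin n) (Fin n) ℤ)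
    (τ : Matrix (Fin k₂) (Fin k₂) ℤ) :
    ContainsPattern M (Matrix.of fun i j : Fin k₁ => τ (finCongr h i) (finCongr h j)) ↔
      ContainsPattern M τ := by
  subst h
  constructor <;> rintro ⟨r, c, hr, hc, hrc⟩ <;> exact ⟨r, c, hr, hc, fun p q => by
    simpa using hrc p q⟩

lemma blockDiag3_eq_assoc (A : Matrix (Fin a) (Fin a) ℤ) (B : Matrix (Fin b) (Fin b) ℤ)
    (C : Matrix (Fin c) (Fin c) ℤ) :
    blockDiag3 A B C = Matrix.of fun i j : Fin (a + b + c) =>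
      blockDiag2 A (blockDiag2 B C) (finCongr (Nat.add_assoc a b c) i)
        (finCongr (Nat.add_assoc a b c) j) := by
  have hab : ∀ i : Fin (a + b + c), (i : ℕ) < a + b → ¬ (i : ℕ) < a → (i : ℕ) - a < b := by
    intro i h1 h2; omega
  have hc3 : ∀ i : Fin (a + b + c), ¬ (i : ℕ) < a + b → (i : ℕ) - (a + b) < c := by
    intro i h1; omega
  ext i j
  show blockDiag2 (blockDiag2 A B) C i j = _
  rw [Matrix.of_apply]
  by_cases hi1 : (i : ℕ) < a + b <;> by_cases hj1 : (j : ℕ) < a + b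
  case pos =>
    by_cases hi2 : (i : ℕ) < a <;> by_cases hj2 : (j : ℕ) < a
    · -- (1,1)
      have e1 : i = Fin.castAdd c (Fin.castAdd b ⟨(i:ℕ), hi2⟩) := Fin.ext (by simp)
      have e2 : j = Fin.castAdd c (Fin.castAdd b ⟨(j:ℕ), hj2⟩) := Fin.ext (by simp)
      have f1 : finCongr (Nat.add_assoc a b c) i = Fin.castAdd (b+c) ⟨(i:ℕ), hi2⟩ :=
        Fin.ext (by simp)
      have f2 : finCongr (Nat.add_assoc a b c) j = Fin.castAdd (b+c) ⟨(j:ℕ), hj2⟩ :=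
        Fin.ext (by simp)
      rw [f1, f2, blockDiag2_ll]
      conv_lhs => rw [e1, e2, blockDiag2_ll, blockDiag2_ll]
    · -- (1,2)
      have e1 : i = Fin.castAdd c (Fin.castAdd b ⟨(i:ℕ), hi2⟩) := Fin.ext (by simp)
      have e2 : j = Fin.castAdd c (Fin.natAdd a ⟨(j:ℕ) - a, hab j hj1 hj2⟩) :=
        Fin.ext (by simp <;> omega)
      have f1 : finCongr (Nat.add_assoc a b c) i = Fin.castAdd (b+c) ⟨(i:ℕ), hi2⟩ :=
        Fin.ext (by simp)
      have f2 : finCongr (Nat.add_assoc a b c) j = Fin.natAdd a ⟨(j:ℕ) - a, by omega⟩ :=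
        Fin.ext (by simp <;> omega)
      rw [f1, f2, blockDiag2_lr]
      conv_lhs => rw [e1, e2, blockDiag2_ll, blockDiag2_lr]
    · -- (2,1)
      have e1 : i = Fin.castAdd c (Fin.natAdd a ⟨(i:ℕ) - a, hab i hi1 hi2⟩) :=
        Fin.ext (by simp <;> omega)
      have e2 : j = Fin.castAdd c (Fin.castAdd b ⟨(j:ℕ), hj2⟩) := Fin.ext (by simp)
      have f1 : finCongr (Nat.add_assoc a b c) i = Fin.natAdd a ⟨(i:ℕ) - a, by omega⟩ :=
        Fin.ext (by simp <;> omega)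
      have f2 : finCongr (Nat.add_assoc a b c) j = Fin.castAdd (b+c) ⟨(j:ℕ), hj2⟩ :=
        Fin.ext (by simp)
      rw [f1, f2, blockDiag2_rl]
      conv_lhs => rw [e1, e2, blockDiag2_ll, blockDiag2_rl]
    · -- (2,2)
      have e1 : i = Fin.castAdd c (Fin.natAdd a ⟨(i:ℕ) - a, hab i hi1 hi2⟩) :=
        Fin.ext (by simp <;> omega)
      have e2 : j = Fin.castAdd c (Fin.natAdd a ⟨(j:ℕ) - a, hab j hj1 hj2⟩) :=
        Fin.ext (by simp <;> omega)
      have f1 : finCongr (Nat.add_assoc a b c) i = Fin.natAdd a ⟨(i:ℕ) - a, by omega⟩ :=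
        Fin.ext (by simp <;> omega)
      have f2 : finCongr (Nat.add_assoc a b c) j = Fin.natAdd a ⟨(j:ℕ) - a, by omega⟩ :=
        Fin.ext (by simp <;> omega)
      rw [f1, f2, blockDiag2_rr]
      have g1 : (⟨(i:ℕ) - a, by omega⟩ : Fin (b + c)) =
          Fin.castAdd c ⟨(i:ℕ) - a, hab i hi1 hi2⟩ := Fin.ext (by simp)
      have g2 : (⟨(j:ℕ) - a, by omega⟩ : Fin (b + c)) =
          Fin.castAdd c ⟨(j:ℕ) - a, hab j hj1 hj2⟩ := Fin.ext (by simp)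
      rw [g1, g2, blockDiag2_ll]
      conv_lhs => rw [e1, e2, blockDiag2_ll, blockDiag2_rr]
  case neg =>
    -- i in first two regions, j in third
    have e2 : j = Fin.natAdd (a+b) ⟨(j:ℕ) - (a+b), hc3 j hj1⟩ := Fin.ext (by simp <;> omega)
    have f2 : finCongr (Nat.add_assoc a b c) j = Fin.natAdd a ⟨(j:ℕ) - a, by omega⟩ :=
      Fin.ext (by simp <;> omega)
    by_cases hi2 : (i : ℕ) < a
    · have e1 : i = Fin.castAdd c (Fin.castAdd b ⟨(i:ℕ), hi2⟩) := Fin.ext (by simp)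
      have f1 : finCongr (Nat.add_assoc a b c) i = Fin.castAdd (b+c) ⟨(i:ℕ), hi2⟩ :=
        Fin.ext (by simp)
      rw [f1, f2, blockDiag2_lr]
      conv_lhs => rw [e1, e2, blockDiag2_lr]
    · have e1 : i = Fin.castAdd c (Fin.natAdd a ⟨(i:ℕ) - a, hab i hi1 hi2⟩) :=
        Fin.ext (by simp <;> omega)
      have f1 : finCongr (Nat.add_assoc a b c) i = Fin.natAdd a ⟨(i:ℕ) - a, by omega⟩ :=
        Fin.ext (by simp <;> omega)
      rw [f1, f2, blockDiag2_rr]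
      have g1 : (⟨(i:ℕ) - a, by omega⟩ : Fin (b + c)) =
          Fin.castAdd c ⟨(i:ℕ) - a, hab i hi1 hi2⟩ := Fin.ext (by simp)
      have g2 : (⟨(j:ℕ) - a, by omega⟩ : Fin (b + c)) =
          Fin.natAdd b ⟨(j:ℕ) - a - b, by omega⟩ := Fin.ext (by simp <;> omega)
      rw [g1, g2, blockDiag2_lr]
      conv_lhs => rw [e1, e2, blockDiag2_lr]
  case pos =>
    -- i in third region, j in first two
    have e1 : i = Fin.natAdd (a+b) ⟨(i:ℕ) - (a+b), hc3 i hi1⟩ := Fin.ext (by simp <;> omega)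
    have f1 : finCongr (Nat.add_assoc a b c) i = Fin.natAdd a ⟨(i:ℕ) - a, by omega⟩ :=
      Fin.ext (by simp <;> omega)
    by_cases hj2 : (j : ℕ) < a
    · have e2 : j = Fin.castAdd c (Fin.castAdd b ⟨(j:ℕ), hj2⟩) := Fin.ext (by simp)
      have f2 : finCongr (Nat.add_assoc a b c) j = Fin.castAdd (b+c) ⟨(j:ℕ), hj2⟩ :=
        Fin.ext (by simp)
      rw [f1, f2, blockDiag2_rl]
      conv_lhs => rw [e1, e2, blockDiag2_rl]
    · have e2 : j = Fin.castAdd c (Fin.natAdd a ⟨(j:ℕ) - a, hab j hj1 hj2⟩) :=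
        Fin.ext (by simp <;> omega)
      have f2 : finCongr (Nat.add_assoc a b c) j = Fin.natAdd a ⟨(j:ℕ) - a, by omega⟩ :=
        Fin.ext (by simp <;> omega)
      rw [f1, f2, blockDiag2_rr]
      have g1 : (⟨(i:ℕ) - a, by omega⟩ : Fin (b + c)) =
          Fin.natAdd b ⟨(i:ℕ) - a - b, by omega⟩ := Fin.ext (by simp <;> omega)
      have g2 : (⟨(j:ℕ) - a, by omega⟩ : Fin (b + c)) =
          Fin.castAdd c ⟨(j:ℕ) - a, hab j hj1 hj2⟩ := Fin.ext (by simp)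
      rw [g1, g2, blockDiag2_rl]
      conv_lhs => rw [e1, e2, blockDiag2_rl]
  case neg =>
    -- both in third region
    have e1 : i = Fin.natAdd (a+b) ⟨(i:ℕ) - (a+b), hc3 i hi1⟩ := Fin.ext (by simp <;> omega)
    have e2 : j = Fin.natAdd (a+b) ⟨(j:ℕ) - (a+b), hc3 j hj1⟩ := Fin.ext (by simp <;> omega)
    have f1 : finCongr (Nat.add_assoc a b c) i = Fin.natAdd a ⟨(i:ℕ) - a, by omega⟩ :=
      Fin.ext (by simp <;> omega)
    have f2 : finCongr (Nat.add_assoc a b c) j = Fin.natAdd a ⟨(j:ℕ) - a, by omega⟩ :=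
      Fin.ext (by simp <;> omega)
    rw [f1, f2, blockDiag2_rr]
    have g1 : (⟨(i:ℕ) - a, by omega⟩ : Fin (b + c)) =
        Fin.natAdd b ⟨(i:ℕ) - a - b, by omega⟩ := Fin.ext (by simp <;> omega)
    have g2 : (⟨(j:ℕ) - a, by omega⟩ : Fin (b + c)) =
        Fin.natAdd b ⟨(j:ℕ) - a - b, by omega⟩ := Fin.ext (by simp <;> omega)
    rw [g1, g2, blockDiag2_rr]
    conv_lhs => rw [e1, e2, blockDiag2_rr]
    congr 1 <;> exact Fin.ext (by simp <;> omega)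

end Aux3
section Aux4
open Matrix
variable {n a b : ℕ}

/-- `A` occurs in `M` strictly above-left of `(i,j)`. -/
def HasOccBelow (M : Matrix (Fin n) (Fin n) ℤ) (A : Matrix (Fin a) (Fin a) ℤ)
    (i j : Fin n) : Prop :=
  ∃ r c : Fin a → Fin n, StrictMono r ∧ StrictMono c ∧ (∀ p, r p < i) ∧ (∀ p, c p < j) ∧
    ∀ p q, M (r p) (c q) = A p q

lemma HasOccBelow.mono {M : Matrix (Fin n) (Fin n) ℤ} {A : Matrix (Fin a) (Fin a) ℤ}
    {i j i' j' : Fin n} (h : HasOccBelow M A i j) (hi : i ≤ i') (hj : j ≤ j') :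
    HasOccBelow M A i' j' := by
  obtain ⟨r, c, hr, hc, hri, hcj, hval⟩ := h
  exact ⟨r, c, hr, hc, fun p => lt_of_lt_of_le (hri p) hi,
    fun p => lt_of_lt_of_le (hcj p) hj, hval⟩

/-- Flip the sign of every entry strictly below-right of some occurrence of `A`. -/
noncomputable def PhiB (A : Matrix (Fin a) (Fin a) ℤ) (M : Matrix (Fin n) (Fin n) ℤ) :
    Matrix (Fin n) (Fin n) ℤ :=
  Matrix.of fun i j =>
    @ite _ (HasOccBelow M A i j) (Classical.propDecidable _) (-M i j) (M i j)

lemma phiB_pos {A : Matrix (Fin a) (Fin a) ℤ} {M : Matrix (Fin n) (Fin n) ℤ} {i j : Fin n}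
    (h : HasOccBelow M A i j) : PhiB A M i j = -M i j := by
  unfold PhiB; rw [Matrix.of_apply, if_pos h]

lemma phiB_neg {A : Matrix (Fin a) (Fin a) ℤ} {M : Matrix (Fin n) (Fin n) ℤ} {i j : Fin n}
    (h : ¬ HasOccBelow M A i j) : PhiB A M i j = M i j := by
  unfold PhiB; rw [Matrix.of_apply, if_neg h]

lemma phiB_zero_iff {A : Matrix (Fin a) (Fin a) ℤ} {M : Matrix (Fin n) (Fin n) ℤ}
    {i j : Fin n} : PhiB A M i j = 0 ↔ M i j = 0 := by
  by_cases h : HasOccBelow M A i j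
  · rw [phiB_pos h]; simp
  · rw [phiB_neg h]

lemma occBelow_phiB {A : Matrix (Fin a) (Fin a) ℤ} {M : Matrix (Fin n) (Fin n) ℤ}
    {i j : Fin n} : HasOccBelow (PhiB A M) A i j ↔ HasOccBelow M A i j := by
  constructor
  · rintro ⟨r, c, hr, hc, hri, hcj, hval⟩
    by_cases hcl : ∃ p q, A p q ≠ 0 ∧ HasOccBelow M A (r p) (c q)
    · obtain ⟨p, q, _, hocc⟩ := hcl
      exact hocc.mono (le_of_lt (hri p)) (le_of_lt (hcj q))
    · push_neg at hcl
      refine ⟨r, c, hr, hc, hri, hcj, fun p q => ?_⟩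
      by_cases hA : A p q = 0
      · rw [hA]
        rw [← phiB_zero_iff (A := A)]
        rw [hval p q, hA]
      · have := hcl p q hA
        rw [← phiB_neg this]
        exact hval p q
  · have main : ∀ N : ℕ, ∀ i j : Fin n, (i : ℕ) < N → HasOccBelow M A i j →
        HasOccBelow (PhiB A M) A i j := by
      intro N
      induction N with
      | zero => intro i j hi; omega
      | succ N ih =>
        intro i j hiN h
        obtain ⟨r, c, hr, hc, hri, hcj, hval⟩ := h
        by_cases hcl : ∃ p q, A p q ≠ 0 ∧ HasOccBelow M A (r p) (c q)
        · obtain ⟨p, q, _, hocc⟩ := hcl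
          have hrp : ((r p : Fin n) : ℕ) < N := by
            have h1 : r p < i := hri p
            have h2 : ((r p : Fin n) : ℕ) < (i : ℕ) := h1
            omega
          have hrec : HasOccBelow (PhiB A M) A (r p) (c q) := ih (r p) (c q) hrp hocc
          exact hrec.mono (le_of_lt (hri p)) (le_of_lt (hcj q))
        · push_neg at hcl
          refine ⟨r, c, hr, hc, hri, hcj, fun p q => ?_⟩
          by_cases hA : A p q = 0
          · rw [hA, phiB_zero_iff, hval p q, hA]
          · rw [phiB_neg (hcl p q hA)]
            exact hval p q
    exact fun h => main ((i : ℕ) + 1) i j (by omega) h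

lemma phiB_invol (A : Matrix (Fin a) (Fin a) ℤ) (M : Matrix (Fin n) (Fin n) ℤ) :
    PhiB A (PhiB A M) = M := by
  ext i j
  by_cases h : HasOccBelow M A i j
  · rw [phiB_pos (occBelow_phiB.mpr h), phiB_pos h, neg_neg]
  · rw [phiB_neg (fun hc => h (occBelow_phiB.mp hc)), phiB_neg h]

lemma phiB_isSignedPerm {A : Matrix (Fin a) (Fin a) ℤ} {M : Matrix (Fin n) (Fin n) ℤ}
    (h : IsSignedPermMatrix M) : IsSignedPermMatrix (PhiB A M) := by
  obtain ⟨h0, hr, hc⟩ := h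
  refine ⟨fun i j => ?_, fun i => ?_, fun j => ?_⟩
  · by_cases hx : HasOccBelow M A i j
    · rw [phiB_pos hx]; rcases h0 i j with h | h | h <;> simp [h]
    · rw [phiB_neg hx]; exact h0 i j
  · obtain ⟨j, hj, hu⟩ := hr i
    refine ⟨j, ?_, fun y hy => hu y ?_⟩
    · show PhiB A M i j ≠ 0
      rw [Ne, phiB_zero_iff]; exact hj
    · have : PhiB A M i y ≠ 0 := hy
      rw [Ne, phiB_zero_iff] at this; exact this
  · obtain ⟨i, hi, hu⟩ := hc j
    refine ⟨i, ?_, fun y hy => hu y ?_⟩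
    · show PhiB A M i j ≠ 0
      rw [Ne, phiB_zero_iff]; exact hi
    · have : PhiB A M y j ≠ 0 := hy
      rw [Ne, phiB_zero_iff] at this; exact this

lemma occBelow_symm {A : Matrix (Fin a) (Fin a) ℤ} {M : Matrix (Fin n) (Fin n) ℤ}
    (hA : A.IsSymm) (hM : M.IsSymm) {i j : Fin n} (h : HasOccBelow M A i j) :
    HasOccBelow M A j i := by
  obtain ⟨r, c, hr, hc, hri, hcj, hval⟩ := h
  exact ⟨c, r, hc, hr, hcj, hri, fun p q => by
    rw [isSymm_apply hM, hval q p, isSymm_apply hA]⟩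

lemma phiB_isSymm {A : Matrix (Fin a) (Fin a) ℤ} {M : Matrix (Fin n) (Fin n) ℤ}
    (hA : A.IsSymm) (hM : M.IsSymm) : (PhiB A M).IsSymm := by
  apply Matrix.IsSymm.ext
  intro i j
  by_cases h : HasOccBelow M A i j
  · rw [phiB_pos (occBelow_symm hA hM h), phiB_pos h, isSymm_apply hM]
  · rw [phiB_neg (fun hc => h (occBelow_symm hA hM hc)), phiB_neg h, isSymm_apply hM]

end Aux4
section Aux5
open Matrix
variable {n a b : ℕ}

lemma strictMono_castAdd : StrictMono (Fin.castAdd b : Fin a → Fin (a + b)) := by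
  intro p q h
  rw [Fin.lt_def] at h ⊢
  simpa using h

lemma castAdd_lt_natAdd (p : Fin a) (q : Fin b) :
    Fin.castAdd b p < Fin.natAdd a q := by
  rw [Fin.lt_def]
  have := p.2
  simp
  omega

lemma strictMono_natAdd : StrictMono (Fin.natAdd a : Fin b → Fin (a + b)) :=
  fun p q h => by
    simp only [Fin.lt_def, Fin.coe_natAdd] at h ⊢
    omega

lemma addCases_val_left {γ : Sort*} (f : Fin a → γ) (g : Fin b → γ) (x : Fin (a + b))
    (hx : (x : ℕ) < a) :
    Fin.addCases (motive := fun _ => γ) f g x = f ⟨(x : ℕ), hx⟩ := by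
  have e : x = Fin.castAdd b ⟨(x : ℕ), hx⟩ := Fin.ext (by simp)
  conv_lhs => rw [e]
  exact Fin.addCases_left _

lemma addCases_val_right {γ : Sort*} (f : Fin a → γ) (g : Fin b → γ) (x : Fin (a + b))
    (hx : ¬ (x : ℕ) < a) :
    Fin.addCases (motive := fun _ => γ) f g x = g ⟨(x : ℕ) - a, by omega⟩ := by
  have e : x = Fin.natAdd a ⟨(x : ℕ) - a, by omega⟩ := Fin.ext (by simp; omega)
  conv_lhs => rw [e]
  exact Fin.addCases_right _

lemma strictMono_addCases (f : Fin a → Fin n) (g : Fin b → Fin n)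
    (hf : StrictMono f) (hg : StrictMono g) (hfg : ∀ p q, f p < g q) :
    StrictMono (Fin.addCases (motive := fun _ => Fin n) f g) := by
  intro x y h
  have hxy : (x : ℕ) < (y : ℕ) := h
  by_cases hx : (x : ℕ) < a <;> by_cases hy : (y : ℕ) < a
  · rw [addCases_val_left f g x hx, addCases_val_left f g y hy]
    exact hf (by rw [Fin.lt_def]; simpa using hxy)
  · rw [addCases_val_left f g x hx, addCases_val_right f g y hy]
    exact hfg _ _
  · omega
  · rw [addCases_val_right f g x hx, addCases_val_right f g y hy]
    exact hg (by rw [Fin.lt_def]; simp; omega)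

lemma contains_blockDiag2_iff {A : Matrix (Fin a) (Fin a) ℤ} {B : Matrix (Fin b) (Fin b) ℤ}
    {M : Matrix (Fin n) (Fin n) ℤ} (hA : IsSignedPermMatrix A) (hB : IsSignedPermMatrix B)
    (hM : IsSignedPermMatrix M) (hb : 0 < b) :
    ContainsPattern M (blockDiag2 A B) ↔
      ∃ rB cB : Fin b → Fin n, StrictMono rB ∧ StrictMono cB ∧
        (∀ p q, M (rB p) (cB q) = B p q) ∧ HasOccBelow M A (rB ⟨0, hb⟩) (cB ⟨0, hb⟩) := by
  constructor
  · rintro ⟨r, c, hr, hc, hval⟩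
    refine ⟨fun p => r (Fin.natAdd a p), fun p => c (Fin.natAdd a p),
      hr.comp strictMono_natAdd, hc.comp strictMono_natAdd, fun p q => ?_, ?_⟩
    · rw [hval (Fin.natAdd a p) (Fin.natAdd a q), blockDiag2_rr]
    · refine ⟨fun p => r (Fin.castAdd b p), fun p => c (Fin.castAdd b p),
        hr.comp strictMono_castAdd, hc.comp strictMono_castAdd, ?_, ?_, fun p q => ?_⟩
      · intro p
        exact hr (castAdd_lt_natAdd p ⟨0, hb⟩)
      · intro p
        exact hc (castAdd_lt_natAdd p ⟨0, hb⟩)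
      · rw [hval (Fin.castAdd b p) (Fin.castAdd b q), blockDiag2_ll]
  · rintro ⟨rB, cB, hrB, hcB, hvalB, rA, cA, hrA, hcA, hri, hcj, hvalA⟩
    have hAB : ∀ p q, rA p < rB q := fun p q =>
      lt_of_lt_of_le (hri p) (hrB.monotone (by rw [Fin.le_def]; simp))
    have hABc : ∀ p q, cA p < cB q := fun p q =>
      lt_of_lt_of_le (hcj p) (hcB.monotone (by rw [Fin.le_def]; simp))
    refine ⟨Fin.addCases (motive := fun _ => Fin n) rA rB,
      Fin.addCases (motive := fun _ => Fin n) cA cB,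
      strictMono_addCases _ _ hrA hrB hAB, strictMono_addCases _ _ hcA hcB hABc,
      fun x y => ?_⟩
    rw [blockDiag2_apply]
    by_cases hx : (x : ℕ) < a <;> by_cases hy : (y : ℕ) < a
    · rw [addCases_val_left rA rB x hx, addCases_val_left cA cB y hy,
        dif_pos hx, dif_pos hy]
      exact hvalA _ _
    · rw [addCases_val_left rA rB x hx, addCases_val_right cA cB y hy,
        dif_pos hx, dif_neg hy]
      -- row of A has a nonzero entry; uniqueness in M forces 0 here
      obtain ⟨q0, hq0, _⟩ := hA.2.1 ⟨(x : ℕ), hx⟩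
      have hnz : M (rA ⟨(x : ℕ), hx⟩) (cA q0) ≠ 0 := by
        rw [hvalA]; exact hq0
      obtain ⟨js, _, hju⟩ := hM.2.1 (rA ⟨(x : ℕ), hx⟩)
      by_contra hne
      have h1 := hju _ hne
      have h2 := hju _ hnz
      rw [← h2] at h1
      have := hABc q0 ⟨(y : ℕ) - a, by omega⟩
      rw [h1] at this
      exact lt_irrefl _ this
    · rw [addCases_val_right rA rB x hx, addCases_val_left cA cB y hy,
        dif_neg hx, dif_pos hy]
      obtain ⟨p0, hp0, _⟩ := hA.2.2 ⟨(y : ℕ), hy⟩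
      have hnz : M (rA p0) (cA ⟨(y : ℕ), hy⟩) ≠ 0 := by
        rw [hvalA]; exact hp0
      obtain ⟨is, _, hiu⟩ := hM.2.2 (cA ⟨(y : ℕ), hy⟩)
      by_contra hne
      have h1 := hiu _ hne
      have h2 := hiu _ hnz
      rw [← h2] at h1
      have := hAB p0 ⟨(x : ℕ) - a, by omega⟩
      rw [h1] at this
      exact lt_irrefl _ this
    · rw [addCases_val_right rA rB x hx, addCases_val_right cA cB y hy,
        dif_neg hx, dif_neg hy]
      exact hvalB _ _

lemma contains_phiB {A : Matrix (Fin a) (Fin a) ℤ} {B : Matrix (Fin b) (Fin b) ℤ}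
    {M : Matrix (Fin n) (Fin n) ℤ} (hA : IsSignedPermMatrix A) (hB : IsSignedPermMatrix B)
    (hM : IsSignedPermMatrix M) (hb : 0 < b) :
    ContainsPattern M (blockDiag2 A B) ↔
      ContainsPattern (PhiB A M) (blockDiag2 A (-B)) := by
  rw [contains_blockDiag2_iff hA hB hM hb,
    contains_blockDiag2_iff hA (neg_isSignedPerm hB) (phiB_isSignedPerm hM) hb]
  constructor
  · rintro ⟨rB, cB, h1, h2, hval, hocc⟩
    refine ⟨rB, cB, h1, h2, fun p q => ?_, occBelow_phiB.mpr hocc⟩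
    have : HasOccBelow M A (rB p) (cB q) :=
      hocc.mono (h1.monotone (by rw [Fin.le_def]; simp)) (h2.monotone (by rw [Fin.le_def]; simp))
    rw [phiB_pos this, hval p q, neg_apply]
  · rintro ⟨rB, cB, h1, h2, hval, hocc⟩
    have hocc' := occBelow_phiB.mp hocc
    refine ⟨rB, cB, h1, h2, fun p q => ?_, hocc'⟩
    have : HasOccBelow M A (rB p) (cB q) :=
      hocc'.mono (h1.monotone (by rw [Fin.le_def]; simp)) (h2.monotone (by rw [Fin.le_def]; simp))
    have h3 := hval p q
    rw [phiB_pos this, neg_apply] at h3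
    omega

lemma lemL {A : Matrix (Fin a) (Fin a) ℤ} {B : Matrix (Fin b) (Fin b) ℤ}
    (hAsym : A.IsSymm) (hA : IsSignedPermMatrix A) (hB : IsSignedPermMatrix B) (n : ℕ) :
    SIAvoidCount n (blockDiag2 A B) = SIAvoidCount n (blockDiag2 A (-B)) := by
  rcases Nat.eq_zero_or_pos b with hb | hb
  · have : -B = B := by
      funext i j
      exact absurd i.2 (by omega)
    rw [this]
  · unfold SIAvoidCount
    apply ncard_eq_of_invol (PhiB A) _ _ (phiB_invol A)
    · rintro M ⟨hsp, hsym, hav⟩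
      refine ⟨phiB_isSignedPerm hsp, phiB_isSymm hAsym hsym, fun hcon => hav ?_⟩
      exact (contains_phiB hA hB hsp hb).mpr hcon
    · rintro M ⟨hsp, hsym, hav⟩
      refine ⟨phiB_isSignedPerm hsp, phiB_isSymm hAsym hsym, fun hcon => hav ?_⟩
      have h2 := contains_phiB hA (neg_isSignedPerm hB) hsp hb
      rw [neg_neg] at h2
      exact h2.mpr hcon

end Aux5
section Aux6
open Matrix
variable {n a b : ℕ}

/-- `B` occurs in `M` strictly below-right of `(i,j)`. -/
def HasOccAbove (M : Matrix (Fin n) (Fin n) ℤ) (B : Matrix (Fin b) (Fin b) ℤ)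
    (i j : Fin n) : Prop :=
  ∃ r c : Fin b → Fin n, StrictMono r ∧ StrictMono c ∧ (∀ p, i < r p) ∧ (∀ p, j < c p) ∧
    ∀ p q, M (r p) (c q) = B p q

lemma HasOccAbove.mono {M : Matrix (Fin n) (Fin n) ℤ} {B : Matrix (Fin b) (Fin b) ℤ}
    {i j i' j' : Fin n} (h : HasOccAbove M B i j) (hi : i' ≤ i) (hj : j' ≤ j) :
    HasOccAbove M B i' j' := by
  obtain ⟨r, c, hr, hc, hri, hcj, hval⟩ := h
  exact ⟨r, c, hr, hc, fun p => lt_of_le_of_lt hi (hri p),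
    fun p => lt_of_le_of_lt hj (hcj p), hval⟩

/-- Flip the sign of every entry strictly above-left of some occurrence of `B`. -/
noncomputable def PhiT (B : Matrix (Fin b) (Fin b) ℤ) (M : Matrix (Fin n) (Fin n) ℤ) :
    Matrix (Fin n) (Fin n) ℤ :=
  Matrix.of fun i j =>
    @ite _ (HasOccAbove M B i j) (Classical.propDecidable _) (-M i j) (M i j)

lemma phiT_pos {B : Matrix (Fin b) (Fin b) ℤ} {M : Matrix (Fin n) (Fin n) ℤ} {i j : Fin n}
    (h : HasOccAbove M B i j) : PhiT B M i j = -M i j := by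
  unfold PhiT; rw [Matrix.of_apply, if_pos h]

lemma phiT_neg {B : Matrix (Fin b) (Fin b) ℤ} {M : Matrix (Fin n) (Fin n) ℤ} {i j : Fin n}
    (h : ¬ HasOccAbove M B i j) : PhiT B M i j = M i j := by
  unfold PhiT; rw [Matrix.of_apply, if_neg h]

lemma phiT_zero_iff {B : Matrix (Fin b) (Fin b) ℤ} {M : Matrix (Fin n) (Fin n) ℤ}
    {i j : Fin n} : PhiT B M i j = 0 ↔ M i j = 0 := by
  by_cases h : HasOccAbove M B i j
  · rw [phiT_pos h]; simp
  · rw [phiT_neg h]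

lemma occAbove_phiT {B : Matrix (Fin b) (Fin b) ℤ} {M : Matrix (Fin n) (Fin n) ℤ}
    {i j : Fin n} : HasOccAbove (PhiT B M) B i j ↔ HasOccAbove M B i j := by
  constructor
  · rintro ⟨r, c, hr, hc, hri, hcj, hval⟩
    by_cases hcl : ∃ p q, B p q ≠ 0 ∧ HasOccAbove M B (r p) (c q)
    · obtain ⟨p, q, _, hocc⟩ := hcl
      exact hocc.mono (le_of_lt (hri p)) (le_of_lt (hcj q))
    · push_neg at hcl
      refine ⟨r, c, hr, hc, hri, hcj, fun p q => ?_⟩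
      by_cases hB : B p q = 0
      · rw [hB]
        rw [← phiT_zero_iff (B := B)]
        rw [hval p q, hB]
      · have := hcl p q hB
        rw [← phiT_neg this]
        exact hval p q
  · have main : ∀ N : ℕ, ∀ i j : Fin n, n - (i : ℕ) ≤ N → HasOccAbove M B i j →
        HasOccAbove (PhiT B M) B i j := by
      intro N
      induction N with
      | zero => intro i j hi; have := i.2; omega
      | succ N ih =>
        intro i j hiN h
        obtain ⟨r, c, hr, hc, hri, hcj, hval⟩ := h
        by_cases hcl : ∃ p q, B p q ≠ 0 ∧ HasOccAbove M B (r p) (c q)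
        · obtain ⟨p, q, _, hocc⟩ := hcl
          have hrp : n - ((r p : Fin n) : ℕ) ≤ N := by
            have h1 : i < r p := hri p
            have h2 : (i : ℕ) < ((r p : Fin n) : ℕ) := h1
            have := (r p).2
            omega
          have hrec : HasOccAbove (PhiT B M) B (r p) (c q) := ih (r p) (c q) hrp hocc
          exact hrec.mono (le_of_lt (hri p)) (le_of_lt (hcj q))
        · push_neg at hcl
          refine ⟨r, c, hr, hc, hri, hcj, fun p q => ?_⟩
          by_cases hB : B p q = 0
          · rw [hB, phiT_zero_iff, hval p q, hB]
          · rw [phiT_neg (hcl p q hB)]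
            exact hval p q
    exact fun h => main n i j (by omega) h

lemma phiT_invol (B : Matrix (Fin b) (Fin b) ℤ) (M : Matrix (Fin n) (Fin n) ℤ) :
    PhiT B (PhiT B M) = M := by
  ext i j
  by_cases h : HasOccAbove M B i j
  · rw [phiT_pos (occAbove_phiT.mpr h), phiT_pos h, neg_neg]
  · rw [phiT_neg (fun hc => h (occAbove_phiT.mp hc)), phiT_neg h]

lemma phiT_isSignedPerm {B : Matrix (Fin b) (Fin b) ℤ} {M : Matrix (Fin n) (Fin n) ℤ}
    (h : IsSignedPermMatrix M) : IsSignedPermMatrix (PhiT B M) := by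
  obtain ⟨h0, hr, hc⟩ := h
  refine ⟨fun i j => ?_, fun i => ?_, fun j => ?_⟩
  · by_cases hx : HasOccAbove M B i j
    · rw [phiT_pos hx]; rcases h0 i j with h | h | h <;> simp [h]
    · rw [phiT_neg hx]; exact h0 i j
  · obtain ⟨j, hj, hu⟩ := hr i
    refine ⟨j, ?_, fun y hy => hu y ?_⟩
    · show PhiT B M i j ≠ 0
      rw [Ne, phiT_zero_iff]; exact hj
    · have : PhiT B M i y ≠ 0 := hy
      rw [Ne, phiT_zero_iff] at this; exact this
  · obtain ⟨i, hi, hu⟩ := hc j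
    refine ⟨i, ?_, fun y hy => hu y ?_⟩
    · show PhiT B M i j ≠ 0
      rw [Ne, phiT_zero_iff]; exact hi
    · have : PhiT B M y j ≠ 0 := hy
      rw [Ne, phiT_zero_iff] at this; exact this

lemma occAbove_symm {B : Matrix (Fin b) (Fin b) ℤ} {M : Matrix (Fin n) (Fin n) ℤ}
    (hB : B.IsSymm) (hM : M.IsSymm) {i j : Fin n} (h : HasOccAbove M B i j) :
    HasOccAbove M B j i := by
  obtain ⟨r, c, hr, hc, hri, hcj, hval⟩ := h
  exact ⟨c, r, hc, hr, hcj, hri, fun p q => by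
    rw [isSymm_apply hM, hval q p, isSymm_apply hB]⟩

lemma phiT_isSymm {B : Matrix (Fin b) (Fin b) ℤ} {M : Matrix (Fin n) (Fin n) ℤ}
    (hB : B.IsSymm) (hM : M.IsSymm) : (PhiT B M).IsSymm := by
  apply Matrix.IsSymm.ext
  intro i j
  by_cases h : HasOccAbove M B i j
  · rw [phiT_pos (occAbove_symm hB hM h), phiT_pos h, isSymm_apply hM]
  · rw [phiT_neg (fun hc => h (occAbove_symm hB hM hc)), phiT_neg h, isSymm_apply hM]

lemma contains_blockDiag2_iff' {A : Matrix (Fin a) (Fin a) ℤ} {B : Matrix (Fin b) (Fin b) ℤ}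
    {M : Matrix (Fin n) (Fin n) ℤ} (hA : IsSignedPermMatrix A) (hB : IsSignedPermMatrix B)
    (hM : IsSignedPermMatrix M) (ha : 0 < a) :
    ContainsPattern M (blockDiag2 A B) ↔
      ∃ rA cA : Fin a → Fin n, StrictMono rA ∧ StrictMono cA ∧
        (∀ p q, M (rA p) (cA q) = A p q) ∧
        HasOccAbove M B (rA ⟨a - 1, by omega⟩) (cA ⟨a - 1, by omega⟩) := by
  constructor
  · rintro ⟨r, c, hr, hc, hval⟩
    refine ⟨fun p => r (Fin.castAdd b p), fun p => c (Fin.castAdd b p),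
      hr.comp strictMono_castAdd, hc.comp strictMono_castAdd, fun p q => ?_, ?_⟩
    · rw [hval (Fin.castAdd b p) (Fin.castAdd b q), blockDiag2_ll]
    · refine ⟨fun p => r (Fin.natAdd a p), fun p => c (Fin.natAdd a p),
        hr.comp strictMono_natAdd, hc.comp strictMono_natAdd,
        fun p => hr (castAdd_lt_natAdd _ p), fun p => hc (castAdd_lt_natAdd _ p),
        fun p q => ?_⟩
      rw [hval (Fin.natAdd a p) (Fin.natAdd a q), blockDiag2_rr]
  · rintro ⟨rA, cA, hrA, hcA, hvalA, rB, cB, hrB, hcB, hri, hcj, hvalB⟩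
    have hAB : ∀ p q, rA p < rB q := fun p q =>
      lt_of_le_of_lt (hrA.monotone (by rw [Fin.le_def]; simp; omega)) (hri q)
    have hABc : ∀ p q, cA p < cB q := fun p q =>
      lt_of_le_of_lt (hcA.monotone (by rw [Fin.le_def]; simp; omega)) (hcj q)
    refine ⟨Fin.addCases (motive := fun _ => Fin n) rA rB,
      Fin.addCases (motive := fun _ => Fin n) cA cB,
      strictMono_addCases _ _ hrA hrB hAB, strictMono_addCases _ _ hcA hcB hABc,
      fun x y => ?_⟩
    rw [blockDiag2_apply]
    by_cases hx : (x : ℕ) < a <;> by_cases hy : (y : ℕ) < a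
    · rw [addCases_val_left rA rB x hx, addCases_val_left cA cB y hy,
        dif_pos hx, dif_pos hy]
      exact hvalA _ _
    · rw [addCases_val_left rA rB x hx, addCases_val_right cA cB y hy,
        dif_pos hx, dif_neg hy]
      obtain ⟨q0, hq0, _⟩ := hA.2.1 ⟨(x : ℕ), hx⟩
      have hnz : M (rA ⟨(x : ℕ), hx⟩) (cA q0) ≠ 0 := by
        rw [hvalA]; exact hq0
      obtain ⟨js, _, hju⟩ := hM.2.1 (rA ⟨(x : ℕ), hx⟩)
      by_contra hne
      have h1 := hju _ hne
      have h2 := hju _ hnz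
      rw [← h2] at h1
      have := hABc q0 ⟨(y : ℕ) - a, by omega⟩
      rw [h1] at this
      exact lt_irrefl _ this
    · rw [addCases_val_right rA rB x hx, addCases_val_left cA cB y hy,
        dif_neg hx, dif_pos hy]
      obtain ⟨p0, hp0, _⟩ := hA.2.2 ⟨(y : ℕ), hy⟩
      have hnz : M (rA p0) (cA ⟨(y : ℕ), hy⟩) ≠ 0 := by
        rw [hvalA]; exact hp0
      obtain ⟨is, _, hiu⟩ := hM.2.2 (cA ⟨(y : ℕ), hy⟩)
      by_contra hne
      have h1 := hiu _ hne
      have h2 := hiu _ hnz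
      rw [← h2] at h1
      have := hAB p0 ⟨(x : ℕ) - a, by omega⟩
      rw [h1] at this
      exact lt_irrefl _ this
    · rw [addCases_val_right rA rB x hx, addCases_val_right cA cB y hy,
        dif_neg hx, dif_neg hy]
      exact hvalB _ _

lemma contains_phiT {A : Matrix (Fin a) (Fin a) ℤ} {B : Matrix (Fin b) (Fin b) ℤ}
    {M : Matrix (Fin n) (Fin n) ℤ} (hA : IsSignedPermMatrix A) (hB : IsSignedPermMatrix B)
    (hM : IsSignedPermMatrix M) (ha : 0 < a) :
    ContainsPattern M (blockDiag2 A B) ↔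
      ContainsPattern (PhiT B M) (blockDiag2 (-A) B) := by
  rw [contains_blockDiag2_iff' hA hB hM ha,
    contains_blockDiag2_iff' (neg_isSignedPerm hA) hB (phiT_isSignedPerm hM) ha]
  constructor
  · rintro ⟨rA, cA, h1, h2, hval, hocc⟩
    refine ⟨rA, cA, h1, h2, fun p q => ?_, ?_⟩
    · have : HasOccAbove M B (rA p) (cA q) :=
        hocc.mono (h1.monotone (by rw [Fin.le_def]; simp; omega))
          (h2.monotone (by rw [Fin.le_def]; simp; omega))
      rw [phiT_pos this, hval p q, neg_apply]
    · exact occAbove_phiT.mpr hocc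
  · rintro ⟨rA, cA, h1, h2, hval, hocc⟩
    have hocc' := occAbove_phiT.mp hocc
    refine ⟨rA, cA, h1, h2, fun p q => ?_, hocc'⟩
    have : HasOccAbove M B (rA p) (cA q) :=
      hocc'.mono (h1.monotone (by rw [Fin.le_def]; simp; omega))
        (h2.monotone (by rw [Fin.le_def]; simp; omega))
    have h3 := hval p q
    rw [phiT_pos this, neg_apply] at h3
    omega

lemma lemT {A : Matrix (Fin a) (Fin a) ℤ} {B : Matrix (Fin b) (Fin b) ℤ}
    (hBsym : B.IsSymm) (hA : IsSignedPermMatrix A) (hB : IsSignedPermMatrix B) (n : ℕ) :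
    SIAvoidCount n (blockDiag2 A B) = SIAvoidCount n (blockDiag2 (-A) B) := by
  rcases Nat.eq_zero_or_pos a with ha | ha
  · have : -A = A := by
      funext i j
      exact absurd i.2 (by omega)
    rw [this]
  · unfold SIAvoidCount
    apply ncard_eq_of_invol (PhiT B) _ _ (phiT_invol B)
    · rintro M ⟨hsp, hsym, hav⟩
      refine ⟨phiT_isSignedPerm hsp, phiT_isSymm hBsym hsym, fun hcon => hav ?_⟩
      exact (contains_phiT hA hB hsp ha).mpr hcon
    · rintro M ⟨hsp, hsym, hav⟩
      refine ⟨phiT_isSignedPerm hsp, phiT_isSymm hBsym hsym, fun hcon => hav ?_⟩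
      have h2 := contains_phiT (neg_isSignedPerm hA) hB hsp ha
      rw [neg_neg] at h2
      exact h2.mpr hcon

end Aux6
section Aux7
open Matrix
variable {n a b c : ℕ}

lemma sia_assoc (A : Matrix (Fin a) (Fin a) ℤ) (B : Matrix (Fin b) (Fin b) ℤ)
    (C : Matrix (Fin c) (Fin c) ℤ) :
    SIAvoidCount n (blockDiag3 A B C) =
      SIAvoidCount n (blockDiag2 A (blockDiag2 B C)) := by
  rw [blockDiag3_eq_assoc]
  exact sia_congr _ _ (fun M => contains_finCongr _ M _)

end Aux7

theorem stmt11' {a b c : ℕ} (χ₁ : Matrix (Fin a) (Fin a) ℤ) (χ₂ : Matrix (Fin b) (Fin b) ℤ)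
    (χ₃ : Matrix (Fin c) (Fin c) ℤ)
    (h1 : IsSignedPermMatrix χ₁) (h2 : IsSignedPermMatrix χ₂) (h3 : IsSignedPermMatrix χ₃)
    (hsym : (χ₁.IsSymm ∧ χ₂.IsSymm) ∨ (χ₁.IsSymm ∧ χ₃.IsSymm) ∨ (χ₂.IsSymm ∧ χ₃.IsSymm)) :
    ∀ n : ℕ, 1 ≤ n →
      SIAvoidCount n (blockDiag3 χ₁ χ₂ χ₃) = SIAvoidCount n (blockDiag3 χ₁ (-χ₂) χ₃) := by
  intro n _
  rcases hsym with ⟨hs1, hs2⟩ | ⟨hs1, hs3⟩ | ⟨hs2, hs3⟩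
  · -- χ₁ and χ₂ symmetric
    calc SIAvoidCount n (blockDiag3 χ₁ χ₂ χ₃)
        = SIAvoidCount n (blockDiag2 χ₁ (blockDiag2 χ₂ χ₃)) := sia_assoc χ₁ χ₂ χ₃
      _ = SIAvoidCount n (blockDiag2 χ₁ (-(blockDiag2 χ₂ χ₃))) :=
          lemL hs1 h1 (blockDiag2_isSignedPerm h2 h3) n
      _ = SIAvoidCount n (blockDiag2 χ₁ (blockDiag2 (-χ₂) (-χ₃))) := by
          rw [blockDiag2_neg]
      _ = SIAvoidCount n (blockDiag3 χ₁ (-χ₂) (-χ₃)) := (sia_assoc χ₁ (-χ₂) (-χ₃)).symm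
      _ = SIAvoidCount n (blockDiag2 (blockDiag2 χ₁ (-χ₂)) (-χ₃)) := rfl
      _ = SIAvoidCount n (blockDiag2 (blockDiag2 χ₁ (-χ₂)) (-(-χ₃))) :=
          lemL (blockDiag2_isSymm hs1 (neg_isSymm hs2))
            (blockDiag2_isSignedPerm h1 (neg_isSignedPerm h2)) (neg_isSignedPerm h3) n
      _ = SIAvoidCount n (blockDiag3 χ₁ (-χ₂) χ₃) := by
          rw [neg_neg]
          rfl
  · -- χ₁ and χ₃ symmetric
    calc SIAvoidCount n (blockDiag3 χ₁ χ₂ χ₃)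
        = SIAvoidCount n (blockDiag2 χ₁ (blockDiag2 χ₂ χ₃)) := sia_assoc χ₁ χ₂ χ₃
      _ = SIAvoidCount n (blockDiag2 χ₁ (-(blockDiag2 χ₂ χ₃))) :=
          lemL hs1 h1 (blockDiag2_isSignedPerm h2 h3) n
      _ = SIAvoidCount n (blockDiag2 χ₁ (blockDiag2 (-χ₂) (-χ₃))) := by
          rw [blockDiag2_neg]
      _ = SIAvoidCount n (blockDiag3 χ₁ (-χ₂) (-χ₃)) := (sia_assoc χ₁ (-χ₂) (-χ₃)).symm
      _ = SIAvoidCount n (blockDiag2 (blockDiag2 χ₁ (-χ₂)) (-χ₃)) := rfl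
      _ = SIAvoidCount n (blockDiag2 (-(blockDiag2 χ₁ (-χ₂))) (-χ₃)) :=
          lemT (neg_isSymm hs3) (blockDiag2_isSignedPerm h1 (neg_isSignedPerm h2))
            (neg_isSignedPerm h3) n
      _ = SIAvoidCount n (blockDiag2 (blockDiag2 (-χ₁) χ₂) (-χ₃)) := by
          rw [blockDiag2_neg, neg_neg]
      _ = SIAvoidCount n (-(blockDiag2 (blockDiag2 (-χ₁) χ₂) (-χ₃))) :=
          sia_neg (blockDiag2 (blockDiag2 (-χ₁) χ₂) (-χ₃))
      _ = SIAvoidCount n (blockDiag3 χ₁ (-χ₂) χ₃) := by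
          rw [blockDiag2_neg, blockDiag2_neg, neg_neg, neg_neg]
          rfl
  · -- χ₂ and χ₃ symmetric
    calc SIAvoidCount n (blockDiag3 χ₁ χ₂ χ₃)
        = SIAvoidCount n (blockDiag2 (blockDiag2 χ₁ χ₂) χ₃) := rfl
      _ = SIAvoidCount n (blockDiag2 (-(blockDiag2 χ₁ χ₂)) χ₃) :=
          lemT hs3 (blockDiag2_isSignedPerm h1 h2) h3 n
      _ = SIAvoidCount n (blockDiag2 (blockDiag2 (-χ₁) (-χ₂)) χ₃) := by
          rw [blockDiag2_neg]
      _ = SIAvoidCount n (blockDiag3 (-χ₁) (-χ₂) χ₃) := rfl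
      _ = SIAvoidCount n (blockDiag2 (-χ₁) (blockDiag2 (-χ₂) χ₃)) :=
          sia_assoc (-χ₁) (-χ₂) χ₃
      _ = SIAvoidCount n (blockDiag2 (-(-χ₁)) (blockDiag2 (-χ₂) χ₃)) :=
          lemT (blockDiag2_isSymm (neg_isSymm hs2) hs3) (neg_isSignedPerm h1)
            (blockDiag2_isSignedPerm (neg_isSignedPerm h2) h3) n
      _ = SIAvoidCount n (blockDiag2 χ₁ (blockDiag2 (-χ₂) χ₃)) := by rw [neg_neg]
      _ = SIAvoidCount n (blockDiag3 χ₁ (-χ₂) χ₃) := (sia_assoc χ₁ (-χ₂) χ₃).symm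
/-- if at least two of χ₁, χ₂, χ₃ are symmetric, then diag(χ₁,χ₂,χ₃)
and diag(χ₁,−χ₂,χ₃) are I-Wilf equivalent. -/
theorem stmt11 {a b c : ℕ} (χ₁ : Matrix (Fin a) (Fin a) ℤ) (χ₂ : Matrix (Fin b) (Fin b) ℤ)
    (χ₃ : Matrix (Fin c) (Fin c) ℤ)
    (h1 : IsSignedPermMatrix χ₁) (h2 : IsSignedPermMatrix χ₂) (h3 : IsSignedPermMatrix χ₃)
    (hsym : (χ₁.IsSymm ∧ χ₂.IsSymm) ∨ (χ₁.IsSymm ∧ χ₃.IsSymm) ∨ (χ₂.IsSymm ∧ χ₃.IsSymm)) :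
    ∀ n : ℕ, 1 ≤ n →
      SIAvoidCount n (blockDiag3 χ₁ χ₂ χ₃) = SIAvoidCount n (blockDiag3 χ₁ (-χ₂) χ₃) := by
  exact stmt11' χ₁ χ₂ χ₃ h1 h2 h3 hsym
end
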